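/- arXiv:1612.07776 — 5 statements merged into one kernel-verified Lean document; each statement's English description precedes it below -/
import Mathlib

section
/- For every n×n real matrix S whose entries satisfy s_*/n ≤ s_{ij} ≤ s^*/n (with constants 0 < s_* ≤ s^*) and for every τ ≥ 0 and η > 0, there exists a unique pair of vectors (v₁, v₂) ∈ (0,∞)^n × (0,∞)^n satisfying the Dyson equation 1/v₁ = η + S v₂ + τ/(η + Sᵗ v₁) and 1/v₂ = η + Sᵗ v₁ + τ/(η + S v₂). Consequently, for every τ ≥ 0 there exist uniquely determined functions v₁^τ, v₂^τ : (0,∞) → (0,∞)^n satisfying these equations for all η > 0. -/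
/-!
Write the equations as `1/v₁ = F(v₁, v₂)`, `1/v₂ = Fᵀ(v₂, v₁)`, where
`F(v₁, v₂) = η + S v₂ + τ/(η + Sᵀ v₁) ≥ η` and `Fᵀ` is `F` with `Sᵀ` in place of `S`; `F`
increases in `v₂` and decreases in `v₁`. Hence `(v₁, v₂) ↦ (1/F(v₁, v₂), 1/Fᵀ(v₂, v₁))` is
monotone on the complete lattice `[0, η⁻¹]ⁿ × ([0, η⁻¹]ⁿ)ᵒᵈ`, and Knaster–Tarski gives a fixed
point, which is automatically positive. For uniqueness, let `t` be the largest ratio between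
corresponding components of two solutions `u`, `v`, taken in both directions. If `t > 1`,
inserting `u ≤ t v` and `v ≤ t u` into the equations makes each of these ratios strictly smaller
than `t`, because `η < t η`; hence `t ≤ 1` and `u = v`.
-/

open Matrix

/-- The Dyson equation `1/v₁ = η + S v₂ + τ/(η + Sᵗ v₁)`,
`1/v₂ = η + Sᵗ v₁ + τ/(η + S v₂)` (componentwise), together with positivity
of the solution. -/
def IsDysonSolution {n : ℕ} (S : Matrix (Fin n) (Fin n) ℝ) (τ η : ℝ)
    (v₁ v₂ : Fin n → ℝ) : Prop :=
  (∀ i, 0 < v₁ i) ∧ (∀ i, 0 < v₂ i) ∧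
  (∀ i, 1 / v₁ i = η + S.mulVec v₂ i + τ / (η + S.transpose.mulVec v₁ i)) ∧
  (∀ i, 1 / v₂ i = η + S.transpose.mulVec v₁ i + τ / (η + S.mulVec v₂ i))

open Set OrderDual

section
variable {ι : Type*} [Fintype ι] {S : Matrix ι ι ℝ} {τ η t : ℝ} {v₁ v₂ u₁ u₂ : ι → ℝ}

lemma mulVec_nonneg_of_nonneg (hS : ∀ i j, 0 ≤ S i j) {v : ι → ℝ} (hv : 0 ≤ v) (i : ι) :
    0 ≤ (S *ᵥ v) i :=
  dotProduct_nonneg_of_nonneg (hS i) hv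

lemma mulVec_le_mulVec_of_nonneg (hS : ∀ i j, 0 ≤ S i j) {v w : ι → ℝ} (hvw : v ≤ w) (i : ι) :
    (S *ᵥ v) i ≤ (S *ᵥ w) i :=
  dotProduct_le_dotProduct_of_nonneg_left hvw (hS i)

/-- The second Dyson equation reads `1 / v₂ = dysonRHS Sᵀ τ η v₂ v₁`. -/
noncomputable def dysonRHS (S : Matrix ι ι ℝ) (τ η : ℝ) (v₁ v₂ : ι → ℝ) (i : ι) : ℝ :=
  η + (S *ᵥ v₂) i + τ / (η + (Sᵀ *ᵥ v₁) i)

lemma le_dysonRHS (hS : ∀ i j, 0 ≤ S i j) (hτ : 0 ≤ τ) (hη : 0 ≤ η) (hv₁ : 0 ≤ v₁)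
    (hv₂ : 0 ≤ v₂) (i : ι) : η ≤ dysonRHS S τ η v₁ v₂ i := by
  have h₁ := mulVec_nonneg_of_nonneg (fun i j => hS j i) hv₁ i
  have h₂ := mulVec_nonneg_of_nonneg hS hv₂ i
  have : 0 ≤ τ / (η + (Sᵀ *ᵥ v₁) i) := by positivity
  unfold dysonRHS
  linarith

lemma inv_dysonRHS_mem_Icc (hS : ∀ i j, 0 ≤ S i j) (hτ : 0 ≤ τ) (hη : 0 < η) (hv₁ : 0 ≤ v₁)
    (hv₂ : 0 ≤ v₂) (i : ι) : (dysonRHS S τ η v₁ v₂ i)⁻¹ ∈ Icc 0 η⁻¹ :=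
  have h := le_dysonRHS hS hτ hη.le hv₁ hv₂ i
  ⟨inv_nonneg.2 (hη.le.trans h), inv_anti₀ hη h⟩

lemma inv_dysonRHS_le_inv_dysonRHS (hS : ∀ i j, 0 ≤ S i j) (hτ : 0 ≤ τ) (hη : 0 < η)
    (hv₁ : 0 ≤ v₁) (hv₂ : 0 ≤ v₂) (h₁ : v₁ ≤ u₁) (h₂ : v₂ ≤ u₂) (i : ι) :
    (dysonRHS S τ η v₁ u₂ i)⁻¹ ≤ (dysonRHS S τ η u₁ v₂ i)⁻¹ := by
  have hSt : ∀ i j, 0 ≤ Sᵀ i j := fun i j => hS j i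
  have := mulVec_nonneg_of_nonneg hSt hv₁ i
  refine inv_anti₀ (hη.trans_le (le_dysonRHS hS hτ hη.le (hv₁.trans h₁) hv₂ i)) ?_
  unfold dysonRHS
  gcongr
  · exact mulVec_le_mulVec_of_nonneg hS h₂ i
  · exact mulVec_le_mulVec_of_nonneg hSt h₁ i

lemma dysonRHS_lt_mul (hS : ∀ i j, 0 ≤ S i j) (hτ : 0 ≤ τ) (hη : 0 < η) (ht : 1 < t)
    (hv₁ : 0 ≤ v₁) (hu₁ : 0 ≤ u₁) (h₁ : u₁ ≤ t • v₁) (h₂ : v₂ ≤ t • u₂) (i : ι) :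
    dysonRHS S τ η v₁ v₂ i < t * dysonRHS S τ η u₁ u₂ i := by
  have hSt : ∀ i j, 0 ≤ Sᵀ i j := fun i j => hS j i
  have ha := mulVec_nonneg_of_nonneg hSt hv₁ i
  have hb := mulVec_nonneg_of_nonneg hSt hu₁ i
  have hηt : η < t * η := lt_mul_of_one_lt_left hη ht
  have hba : (Sᵀ *ᵥ u₁) i ≤ t * (Sᵀ *ᵥ v₁) i := by
    simpa only [mulVec_smul, Pi.smul_apply, smul_eq_mul] using mulVec_le_mulVec_of_nonneg hSt h₁ i
  have hcd : (S *ᵥ v₂) i ≤ t * (S *ᵥ u₂) i := by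
    simpa only [mulVec_smul, Pi.smul_apply, smul_eq_mul] using mulVec_le_mulVec_of_nonneg hS h₂ i
  have hτ' : τ / (η + (Sᵀ *ᵥ v₁) i) ≤ t * (τ / (η + (Sᵀ *ᵥ u₁) i)) := by
    have hden : η + (Sᵀ *ᵥ u₁) i ≤ t * (η + (Sᵀ *ᵥ v₁) i) := by linarith
    rw [mul_div_assoc', div_le_div_iff₀ (by positivity) (by positivity)]
    linarith [mul_le_mul_of_nonneg_left hden hτ]
  unfold dysonRHS
  linarith

lemma lt_mul_of_one_div_eq_dysonRHS {k : ι} (hS : ∀ i j, 0 ≤ S i j) (hτ : 0 ≤ τ) (hη : 0 < η)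
    (ht : 1 < t) (hv₁ : ∀ i, 0 < v₁ i) (hu₁ : ∀ i, 0 < u₁ i)
    (hv : 1 / v₁ k = dysonRHS S τ η v₁ v₂ k) (hu : 1 / u₁ k = dysonRHS S τ η u₁ u₂ k)
    (h₁ : u₁ ≤ t • v₁) (h₂ : v₂ ≤ t • u₂) : u₁ k < t * v₁ k := by
  have hD := dysonRHS_lt_mul hS hτ hη ht (fun i => (hv₁ i).le) (fun i => (hu₁ i).le) h₁ h₂ k
  rw [← hv, ← hu, mul_one_div, div_lt_div_iff₀ (hv₁ k) (hu₁ k)] at hD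
  linarith

noncomputable def dysonMap (hS : ∀ i j, 0 ≤ S i j) (hτ : 0 ≤ τ) (hη : 0 < η) :
    (ι → Icc 0 η⁻¹) × (ι → Icc 0 η⁻¹)ᵒᵈ →o (ι → Icc 0 η⁻¹) × (ι → Icc 0 η⁻¹)ᵒᵈ where
  toFun p :=
    have hp₁ : 0 ≤ fun j => (p.1 j : ℝ) := fun j => (p.1 j).2.1
    have hp₂ : 0 ≤ fun j => (ofDual p.2 j : ℝ) := fun j => (ofDual p.2 j).2.1
    (fun i => ⟨_, inv_dysonRHS_mem_Icc hS hτ hη hp₁ hp₂ i⟩,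
      toDual fun i => ⟨_, inv_dysonRHS_mem_Icc (S := Sᵀ) (fun i j => hS j i) hτ hη hp₂ hp₁ i⟩)
  monotone' p q := by
    rintro ⟨h₁, h₂⟩
    have hp₁ : 0 ≤ fun j => (p.1 j : ℝ) := fun j => (p.1 j).2.1
    have hq₂ : 0 ≤ fun j => (ofDual q.2 j : ℝ) := fun j => (ofDual q.2 j).2.1
    refine ⟨fun i => ?_, toDual_le_toDual.2 fun i => ?_⟩
    · exact inv_dysonRHS_le_inv_dysonRHS hS hτ hη hp₁ hq₂ h₁ h₂ i
    · exact inv_dysonRHS_le_inv_dysonRHS (S := Sᵀ) (fun i j => hS j i) hτ hη hq₂ hp₁ h₂ h₁ i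

end

section
variable {n : ℕ} {S : Matrix (Fin n) (Fin n) ℝ} {τ η : ℝ} {v₁ v₂ u₁ u₂ : Fin n → ℝ}

lemma isDysonSolution_iff : IsDysonSolution S τ η v₁ v₂ ↔ (∀ i, 0 < v₁ i) ∧ (∀ i, 0 < v₂ i) ∧
    (∀ i, 1 / v₁ i = dysonRHS S τ η v₁ v₂ i) ∧ ∀ i, 1 / v₂ i = dysonRHS Sᵀ τ η v₂ v₁ i := by
  simp only [IsDysonSolution, dysonRHS, transpose_transpose]

theorem exists_isDysonSolution (hS : ∀ i j, 0 ≤ S i j) (hτ : 0 ≤ τ) (hη : 0 < η) :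
    ∃ v₁ v₂, IsDysonSolution S τ η v₁ v₂ := by
  have : Fact (0 ≤ η⁻¹) := ⟨inv_nonneg.2 hη.le⟩
  have hfix := (dysonMap hS hτ hη).map_lfp
  set p := (dysonMap hS hτ hη).lfp
  set x₁ : Fin n → ℝ := fun i => p.1 i
  set x₂ : Fin n → ℝ := fun i => ofDual p.2 i
  have hx₁ : ∀ i, x₁ i = (dysonRHS S τ η x₁ x₂ i)⁻¹ := fun i =>
    congrArg (fun q => (q.1 i : ℝ)) hfix.symm
  have hx₂ : ∀ i, x₂ i = (dysonRHS Sᵀ τ η x₂ x₁ i)⁻¹ := fun i =>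
    congrArg (fun q : (Fin n → Icc 0 η⁻¹) × (Fin n → Icc 0 η⁻¹)ᵒᵈ => (ofDual q.2 i : ℝ))
      hfix.symm
  have hx₁₀ : 0 ≤ x₁ := fun i => (p.1 i).2.1
  have hx₂₀ : 0 ≤ x₂ := fun i => (ofDual p.2 i).2.1
  refine ⟨x₁, x₂, isDysonSolution_iff.2 ⟨fun i => ?_, fun i => ?_, fun i => ?_, fun i => ?_⟩⟩
  · rw [hx₁ i]
    exact inv_pos.2 (hη.trans_le (le_dysonRHS hS hτ hη.le hx₁₀ hx₂₀ i))
  · rw [hx₂ i]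
    exact inv_pos.2 (hη.trans_le (le_dysonRHS (S := Sᵀ) (fun i j => hS j i) hτ hη.le hx₂₀ hx₁₀ i))
  · rw [hx₁ i, one_div, inv_inv]
  · rw [hx₂ i, one_div, inv_inv]

theorem IsDysonSolution.unique (hS : ∀ i j, 0 ≤ S i j) (hτ : 0 ≤ τ) (hη : 0 < η)
    (hv : IsDysonSolution S τ η v₁ v₂) (hu : IsDysonSolution S τ η u₁ u₂) :
    u₁ = v₁ ∧ u₂ = v₂ := by
  rcases isEmpty_or_nonempty (Fin n) with _ | _
  · exact ⟨Subsingleton.elim _ _, Subsingleton.elim _ _⟩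
  obtain ⟨hv₁, hv₂, hv₁eq, hv₂eq⟩ := isDysonSolution_iff.1 hv
  obtain ⟨hu₁, hu₂, hu₁eq, hu₂eq⟩ := isDysonSolution_iff.1 hu
  let r i := max (max (u₁ i / v₁ i) (v₁ i / u₁ i)) (max (u₂ i / v₂ i) (v₂ i / u₂ i))
  obtain ⟨k, hk⟩ := Finite.exists_max r
  have le_smul {a b : Fin n → ℝ} (hb : ∀ i, 0 < b i) (hab : ∀ i, a i / b i ≤ r i) :
      a ≤ r k • b := fun i => (div_le_iff₀ (hb i)).1 ((hab i).trans (hk i))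
  have h₁ : u₁ ≤ r k • v₁ := le_smul hv₁ fun i => (le_max_left _ _).trans (le_max_left _ _)
  have h₂ : v₁ ≤ r k • u₁ := le_smul hu₁ fun i => (le_max_right _ _).trans (le_max_left _ _)
  have h₃ : u₂ ≤ r k • v₂ := le_smul hv₂ fun i => (le_max_left _ _).trans (le_max_right _ _)
  have h₄ : v₂ ≤ r k • u₂ := le_smul hu₂ fun i => (le_max_right _ _).trans (le_max_right _ _)
  rcases le_or_gt (r k) 1 with hr | hr
  · have le_of_le_smul {a b : Fin n → ℝ} (hb : ∀ i, 0 < b i) (hab : a ≤ r k • b) : a ≤ b :=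
      fun i => (hab i).trans (mul_le_of_le_one_left (hb i).le hr)
    exact ⟨le_antisymm (le_of_le_smul hv₁ h₁) (le_of_le_smul hu₁ h₂),
      le_antisymm (le_of_le_smul hv₂ h₃) (le_of_le_smul hu₂ h₄)⟩
  have hSt : ∀ i j, 0 ≤ Sᵀ i j := fun i j => hS j i
  refine absurd (max_lt (max_lt ?_ ?_) (max_lt ?_ ?_)) (lt_irrefl (r k))
  · exact (div_lt_iff₀ (hv₁ k)).2 <|
      lt_mul_of_one_div_eq_dysonRHS hS hτ hη hr hv₁ hu₁ (hv₁eq k) (hu₁eq k) h₁ h₄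
  · exact (div_lt_iff₀ (hu₁ k)).2 <|
      lt_mul_of_one_div_eq_dysonRHS hS hτ hη hr hu₁ hv₁ (hu₁eq k) (hv₁eq k) h₂ h₃
  · exact (div_lt_iff₀ (hv₂ k)).2 <|
      lt_mul_of_one_div_eq_dysonRHS hSt hτ hη hr hv₂ hu₂ (hv₂eq k) (hu₂eq k) h₃ h₂
  · exact (div_lt_iff₀ (hu₂ k)).2 <|
      lt_mul_of_one_div_eq_dysonRHS hSt hτ hη hr hu₂ hv₂ (hu₂eq k) (hv₂eq k) h₄ h₁

end

theorem existence_uniqueness_dyson_equation_general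
    (n : ℕ) (sl su : ℝ) (hsl : 0 < sl)
    (S : Matrix (Fin n) (Fin n) ℝ)
    (hS : ∀ i j, sl / n ≤ S i j ∧ S i j ≤ su / n) :
    (∀ τ : ℝ, 0 ≤ τ → ∀ η : ℝ, 0 < η →
      ∃! p : (Fin n → ℝ) × (Fin n → ℝ), IsDysonSolution S τ η p.1 p.2) ∧
    (∀ τ : ℝ, 0 ≤ τ →
      ∃! v : {η : ℝ // 0 < η} → (Fin n → ℝ) × (Fin n → ℝ),
        ∀ η : {η : ℝ // 0 < η}, IsDysonSolution S τ η.1 (v η).1 (v η).2) := by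
  have hS₀ : ∀ i j, 0 ≤ S i j := fun i j => (div_nonneg hsl.le n.cast_nonneg).trans (hS i j).1
  have unique_solution : ∀ τ : ℝ, 0 ≤ τ → ∀ η : ℝ, 0 < η →
      ∃! p : (Fin n → ℝ) × (Fin n → ℝ), IsDysonSolution S τ η p.1 p.2 := by
    intro τ hτ η hη
    obtain ⟨v₁, v₂, hv⟩ := exists_isDysonSolution hS₀ hτ hη
    refine ⟨(v₁, v₂), hv, fun u hu => ?_⟩
    obtain ⟨h₁, h₂⟩ := hv.unique hS₀ hτ hη hu
    exact Prod.ext h₁ h₂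
  refine ⟨unique_solution, fun τ hτ => ?_⟩
  obtain ⟨v, hv⟩ := forall_existsUnique_iff.1 fun η : {η : ℝ // 0 < η} =>
    unique_solution τ hτ η.1 η.2
  exact ⟨v, fun η => hv.2 rfl, fun w hw => funext fun η => (hv.1 (hw η)).symm⟩

/-- **Existence and uniqueness for the Dyson equation.**
For every flat variance matrix `S`, every `τ ≥ 0` and every `η > 0` there is a
unique pair of positive vectors solving the Dyson equation; consequently, for
every `τ ≥ 0` there is a unique pair of functions `(0,∞) → (0,∞)ⁿ × (0,∞)ⁿ`
solving the equations for all `η > 0`. -/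
theorem existence_uniqueness_dyson_equation
    (n : ℕ) (hn : 1 ≤ n) (sl su : ℝ) (hsl : 0 < sl) (hslsu : sl ≤ su)
    (S : Matrix (Fin n) (Fin n) ℝ)
    (hS : ∀ i j, sl / n ≤ S i j ∧ S i j ≤ su / n) :
    (∀ τ : ℝ, 0 ≤ τ → ∀ η : ℝ, 0 < η →
      ∃! p : (Fin n → ℝ) × (Fin n → ℝ), IsDysonSolution S τ η p.1 p.2) ∧
    (∀ τ : ℝ, 0 ≤ τ →
      ∃! v : {η : ℝ // 0 < η} → (Fin n → ℝ) × (Fin n → ℝ),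
        ∀ η : {η : ℝ // 0 < η}, IsDysonSolution S τ η.1 (v η).1 (v η).2) :=
  existence_uniqueness_dyson_equation_general n sl su hsl S hS
end

section
/- For every τ ≥ 0 and η > 0, the unique positive solution (v₁^τ(η), v₂^τ(η)) of the Dyson equation satisfies ⟨v₁^τ(η)⟩ = ⟨v₂^τ(η)⟩, i.e., n^{-1}Σ_{i=1}^n (v₁^τ(η))_i = n^{-1}Σ_{i=1}^n (v₂^τ(η))_i. -/
/-!
Multiplying each Dyson equation by its own unknown gives `1 = vᵢ · (η + …)`; summing over `i`
expresses `n` in two ways. The cross terms `⟨v₁, S v₂⟩` and `⟨v₂, Sᵗ v₁⟩` agree by duality,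
and the `τ`-terms agree entry by entry, because both equations force
`v₁ / (η + Sᵗ v₁) = 1 / ((η + S v₂)(η + Sᵗ v₁) + τ) = v₂ / (η + S v₂)`.
What remains is `η ∑ v₁ = η ∑ v₂`.
-/

open Matrix

/-- The average `⟨w⟩ = n⁻¹ ∑ᵢ wᵢ` of a vector. -/
noncomputable def avg {n : ℕ} (w : Fin n → ℝ) : ℝ := (∑ i, w i) / n

theorem div_eq_div_of_one_div_eq_add {K : Type*} [Field K] {v₁ v₂ a b τ : K}
    (ha : a ≠ 0) (hb : b ≠ 0) (h₁ : 1 / v₁ = b + τ / a) (h₂ : 1 / v₂ = a + τ / b) :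
    v₁ / a = v₂ / b := by
  have hv₁ : v₁ = a / (a * b + τ) := by
    rw [← one_div_one_div v₁, h₁]
    field_simp
  have hv₂ : v₂ = b / (a * b + τ) := by
    rw [← one_div_one_div v₂, h₂]
    field_simp
  rw [hv₁, hv₂, div_div_cancel_left' ha, div_div_cancel_left' hb]

namespace IsDysonSolution

variable {n : ℕ} {S : Matrix (Fin n) (Fin n) ℝ} {τ η : ℝ} {v₁ v₂ : Fin n → ℝ}

theorem swap (hv : IsDysonSolution S τ η v₁ v₂) : IsDysonSolution Sᵀ τ η v₂ v₁ := by
  obtain ⟨h₁, h₂, e₁, e₂⟩ := hv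
  exact ⟨h₂, h₁, by simpa only [transpose_transpose] using e₂,
    by simpa only [transpose_transpose] using e₁⟩

theorem add_transpose_mulVec_pos (hv : IsDysonSolution S τ η v₁ v₂)
    (hS : ∀ i j, 0 ≤ S i j) (hη : 0 < η) (i : Fin n) : 0 < η + (Sᵀ *ᵥ v₁) i :=
  add_pos_of_pos_of_nonneg hη <|
    dotProduct_nonneg_of_nonneg (fun j => hS j i) fun j => (hv.1 j).le

theorem div_eq_div (hv : IsDysonSolution S τ η v₁ v₂) (hS : ∀ i j, 0 ≤ S i j) (hη : 0 < η)
    (i : Fin n) : v₁ i / (η + (Sᵀ *ᵥ v₁) i) = v₂ i / (η + (S *ᵥ v₂) i) := by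
  have hb : 0 < η + (S *ᵥ v₂) i := by
    simpa only [transpose_transpose] using
      hv.swap.add_transpose_mulVec_pos (fun i j => hS j i) hη i
  exact div_eq_div_of_one_div_eq_add (hv.add_transpose_mulVec_pos hS hη i).ne' hb.ne'
    (by rw [hv.2.2.1 i, add_assoc]) (by rw [hv.2.2.2 i, add_assoc])

theorem sum_eq_card (hv : IsDysonSolution S τ η v₁ v₂) :
    η * ∑ i, v₁ i + v₁ ⬝ᵥ (S *ᵥ v₂) + τ * ∑ i, v₁ i / (η + (Sᵀ *ᵥ v₁) i) = n := by
  have hterm : ∀ i, v₁ i * (η + (S *ᵥ v₂) i + τ / (η + (Sᵀ *ᵥ v₁) i)) = 1 := fun i => by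
    rw [← hv.2.2.1 i, mul_one_div_cancel (hv.1 i).ne']
  calc η * ∑ i, v₁ i + v₁ ⬝ᵥ (S *ᵥ v₂) + τ * ∑ i, v₁ i / (η + (Sᵀ *ᵥ v₁) i)
      = ∑ i, v₁ i * (η + (S *ᵥ v₂) i + τ / (η + (Sᵀ *ᵥ v₁) i)) := by
        simp only [dotProduct, Finset.mul_sum, ← Finset.sum_add_distrib]
        exact Finset.sum_congr rfl fun i _ => by ring
    _ = n := by simp [hterm]

end IsDysonSolution

theorem avg_v1_eq_avg_v2_general
    (n : ℕ) (sl su : ℝ) (hsl : 0 < sl)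
    (S : Matrix (Fin n) (Fin n) ℝ)
    (hS : ∀ i j, sl / n ≤ S i j ∧ S i j ≤ su / n)
    (τ : ℝ) (η : ℝ) (hη : 0 < η)
    (v₁ v₂ : Fin n → ℝ) (hv : IsDysonSolution S τ η v₁ v₂) :
    avg v₁ = avg v₂ := by
  have hS₀ : ∀ i j, 0 ≤ S i j := fun i j => (div_nonneg hsl.le n.cast_nonneg).trans (hS i j).1
  have h₁ := hv.sum_eq_card
  have h₂ := hv.swap.sum_eq_card
  simp only [transpose_transpose] at h₂
  have hcross : v₁ ⬝ᵥ (S *ᵥ v₂) = v₂ ⬝ᵥ (Sᵀ *ᵥ v₁) := by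
    rw [dotProduct_mulVec, ← mulVec_transpose, dotProduct_comm]
  have hτ : ∑ i, v₁ i / (η + (Sᵀ *ᵥ v₁) i) = ∑ i, v₂ i / (η + (S *ᵥ v₂) i) :=
    Finset.sum_congr rfl fun i _ => hv.div_eq_div hS₀ hη i
  rw [hcross, hτ] at h₁
  have hsum : ∑ i, v₁ i = ∑ i, v₂ i := mul_left_cancel₀ hη.ne' (by linarith)
  rw [avg, avg, hsum]

/-- **Equality of the averages of the two components of the Dyson solution:**
for every `τ ≥ 0` and `η > 0`, the (unique) positive solution `(v₁, v₂)` of the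
Dyson equation satisfies `⟨v₁⟩ = ⟨v₂⟩`. -/
theorem avg_v1_eq_avg_v2
    (n : ℕ) (hn : 1 ≤ n) (sl su : ℝ) (hsl : 0 < sl) (hslsu : sl ≤ su)
    (S : Matrix (Fin n) (Fin n) ℝ)
    (hS : ∀ i j, sl / n ≤ S i j ∧ S i j ≤ su / n)
    (τ : ℝ) (hτ : 0 ≤ τ) (η : ℝ) (hη : 0 < η)
    (v₁ v₂ : Fin n → ℝ) (hv : IsDysonSolution S τ η v₁ v₂) :
    avg v₁ = avg v₂ :=
  avg_v1_eq_avg_v2_general n sl su hsl S hS τ η hη v₁ v₂ hv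
end

section
/- Large-η behaviour of the Dyson solution: assume the spectral radius of S equals 1 and fix τ^* > 0. There exist constants c, C > 0, depending only on s_*, s^* and τ^*, such that for all η ≥ 1, all τ ∈ [0, τ^*], every index i and a = 1, 2, the unique positive solution satisfies c/η ≤ (v_a^τ(η))_i ≤ C/η. -/
open Matrix

/-- The spectral radius of a real matrix (as a real number), computed via the
complex spectrum. -/
noncomputable def specRad {n : ℕ} (S : Matrix (Fin n) (Fin n) ℝ) : ℝ :=
  (spectralRadius ℂ (S.map (algebraMap ℝ ℂ))).toReal

/-!
All terms on the right-hand side of the Dyson equation are nonnegative, so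
`1 / v_a ≥ η`, i.e. `v_a ≤ 1 / η`. Feeding this back into the equation,
`S v₂ ≤ s⁺ / η ≤ s⁺ η` and `τ / (η + Sᵗ v₁) ≤ τ⁺ ≤ τ⁺ η` for `η ≥ 1`, hence
`1 / v_a ≤ (1 + s⁺ + τ⁺) η`. The system is symmetric under
`(S, v₁, v₂) ↦ (Sᵗ, v₂, v₁)`, so it suffices to bound `v₁`.
-/

namespace Matrix

variable {ι : Type*} [Fintype ι]

lemma mulVec_apply_nonneg {A : Matrix ι ι ℝ} (hA : ∀ i j, 0 ≤ A i j) {w : ι → ℝ}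
    (hw : 0 ≤ w) (i : ι) : 0 ≤ (A *ᵥ w) i :=
  dotProduct_nonneg_of_nonneg (fun j => hA i j) hw

lemma mulVec_apply_le_card_mul {A : Matrix ι ι ℝ} {a b : ℝ} (hA₀ : ∀ i j, 0 ≤ A i j)
    (hA : ∀ i j, A i j ≤ a) {w : ι → ℝ} (hw₀ : 0 ≤ w) (hw : ∀ j, w j ≤ b) (i : ι) :
    (A *ᵥ w) i ≤ Fintype.card ι * a * b := by
  calc (A *ᵥ w) i = ∑ j, A i j * w j := rfl
    _ ≤ ∑ _j : ι, a * b :=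
      Finset.sum_le_sum fun j _ =>
        mul_le_mul (hA i j) (hw j) (hw₀ j) ((hA₀ i j).trans (hA i j))
    _ = Fintype.card ι * a * b := by simp [mul_assoc]

end Matrix

namespace IsDysonSolution

variable {n : ℕ} {S : Matrix (Fin n) (Fin n) ℝ} {τ η : ℝ} {v₁ v₂ : Fin n → ℝ}

lemma transpose (h : IsDysonSolution S τ η v₁ v₂) : IsDysonSolution Sᵀ τ η v₂ v₁ := by
  obtain ⟨hv₁, hv₂, heq₁, heq₂⟩ := h
  exact ⟨hv₂, hv₁, by simpa only [transpose_transpose] using heq₂, heq₁⟩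

lemma left_le_one_div (h : IsDysonSolution S τ η v₁ v₂) (hS : ∀ i j, 0 ≤ S i j)
    (hτ : 0 ≤ τ) (hη : 0 < η) (i : Fin n) : v₁ i ≤ 1 / η := by
  obtain ⟨hv₁, hv₂, heq₁, -⟩ := h
  have hSv₂ := mulVec_apply_nonneg hS (fun j => (hv₂ j).le) i
  have hSv₁ := mulVec_apply_nonneg (A := Sᵀ) (fun a b => hS b a) (fun j => (hv₁ j).le) i
  have hfrac : 0 ≤ τ / (η + (Sᵀ *ᵥ v₁) i) := div_nonneg hτ (by linarith)
  rw [le_one_div (hv₁ i) hη, heq₁ i]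
  linarith

lemma one_div_div_le_left (h : IsDysonSolution S τ η v₁ v₂) {s t : ℝ}
    (hS₀ : ∀ i j, 0 ≤ S i j) (hS : ∀ i j, S i j ≤ s / n) (hs : 0 ≤ s) (hτ₀ : 0 ≤ τ)
    (hτ : τ ≤ t) (hη : 1 ≤ η) (i : Fin n) : 1 / (1 + s + t) / η ≤ v₁ i := by
  have hη₀ : 0 < η := one_pos.trans_le hη
  have hv₂ : ∀ j, v₂ j ≤ 1 / η := h.transpose.left_le_one_div (fun a b => hS₀ b a) hτ₀ hη₀
  obtain ⟨hv₁, hv₂₀, heq₁, -⟩ := h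
  have hn : (n : ℝ) ≠ 0 := Nat.cast_ne_zero.mpr i.pos.ne'
  have hSv₂ : (S *ᵥ v₂) i ≤ s * η := by
    calc (S *ᵥ v₂) i ≤ n * (s / n) * (1 / η) := by
          simpa using mulVec_apply_le_card_mul hS₀ hS (fun j => (hv₂₀ j).le) hv₂ i
      _ = s / η := by field_simp
      _ ≤ s * η := (div_le_self hs hη).trans (le_mul_of_one_le_right hs hη)
  have hSv₁ := mulVec_apply_nonneg (A := Sᵀ) (fun a b => hS₀ b a) (fun j => (hv₁ j).le) i
  have hfrac : τ / (η + (Sᵀ *ᵥ v₁) i) ≤ t * η :=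
    calc τ / (η + (Sᵀ *ᵥ v₁) i) ≤ τ := div_le_self hτ₀ (by linarith)
      _ ≤ t * η := hτ.trans (le_mul_of_one_le_right (hτ₀.trans hτ) hη)
  have hK : 0 < (1 + s + t) * η := by nlinarith
  rw [div_div, one_div_le hK (hv₁ i), heq₁ i]
  linarith

end IsDysonSolution

/-- **Large-`η` behaviour of the Dyson solution:** if `ρ(S) = 1`, then uniformly
for `η ≥ 1` and `τ ∈ [0, τ⁺]` the positive solution satisfies `v_a ∼ 1/η`,
with constants depending only on `s⁎`, `s⁺` and `τ⁺`. -/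
theorem dyson_solution_large_eta
    (sl su τsup : ℝ) (hsl : 0 < sl) (hslsu : sl ≤ su) (hτsup : 0 < τsup) :
    ∃ c > (0:ℝ), ∃ C > (0:ℝ),
      ∀ (n : ℕ), 1 ≤ n → ∀ S : Matrix (Fin n) (Fin n) ℝ,
        (∀ i j, sl / n ≤ S i j ∧ S i j ≤ su / n) → specRad S = 1 →
        ∀ η : ℝ, 1 ≤ η → ∀ τ : ℝ, τ ∈ Set.Icc (0:ℝ) τsup →
          ∀ v₁ v₂ : Fin n → ℝ, IsDysonSolution S τ η v₁ v₂ →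
            ∀ i, (c / η ≤ v₁ i ∧ v₁ i ≤ C / η) ∧ (c / η ≤ v₂ i ∧ v₂ i ≤ C / η) := by
  have hsu : 0 ≤ su := hsl.le.trans hslsu
  refine ⟨1 / (1 + su + τsup), by positivity, 1, one_pos, ?_⟩
  intro n _ S hS _ η hη τ ⟨hτ₀, hτ⟩ v₁ v₂ h i
  have hS₀ : ∀ i j, 0 ≤ S i j := fun i j =>
    (div_nonneg hsl.le n.cast_nonneg).trans (hS i j).1
  have hST₀ : ∀ i j, 0 ≤ Sᵀ i j := fun i j => hS₀ j i
  have hη₀ : 0 < η := one_pos.trans_le hη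
  exact ⟨⟨h.one_div_div_le_left hS₀ (fun a b => (hS a b).2) hsu hτ₀ hτ hη i,
      h.left_le_one_div hS₀ hτ₀ hη₀ i⟩,
    ⟨h.transpose.one_div_div_le_left hST₀ (fun a b => (hS b a).2) hsu hτ₀ hτ hη i,
      h.transpose.left_le_one_div hST₀ hτ₀ hη₀ i⟩⟩
end

section
/- Spectral structure of F: for every τ ≥ 0 and η > 0, the eigenspace of the symmetric matrix F corresponding to its largest eigenvalue ‖F‖₂ is one-dimensional and spanned by a unique entrywise positive eigenvector f₊ with ‖f₊‖₂ = 1, i.e., F f₊ = ‖F‖₂ f₊. The norm satisfies ‖F‖₂ = 1 − η·⟨f₊ √(v/(η + S_o v))⟩ / ⟨f₊ √(v(η + S_o v))⟩. Moreover, setting f₋ := e₋ f₊ (componentwise product), where e₋ := (1,…,1,−1,…,−1) ∈ ℝ^{2n}, one has F f₋ = −‖F‖₂ f₋. -/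
open Matrix

/-- The `2n × 2n` block matrix `S_o = [[0, S], [Sᵗ, 0]]`. -/
def SoM {n : ℕ} (S : Matrix (Fin n) (Fin n) ℝ) :
    Matrix (Fin n ⊕ Fin n) (Fin n ⊕ Fin n) ℝ :=
  Matrix.fromBlocks 0 S S.transpose 0

/-- The auxiliary vector `u = v₁/(η + Sᵗ v₁)`. -/
noncomputable def uvec {n : ℕ} (S : Matrix (Fin n) (Fin n) ℝ) (η : ℝ)
    (v₁ : Fin n → ℝ) : Fin n → ℝ :=
  fun i => v₁ i / (η + S.transpose.mulVec v₁ i)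

/-- The matrix `F`, acting by `F y = √(v u/ṽ) · S_o(√(v u/ṽ) · y)`, realized as
`diag(w) S_o diag(w)` with `w = √(v u/ṽ)`. -/
noncomputable def FM {n : ℕ} (S : Matrix (Fin n) (Fin n) ℝ) (η : ℝ)
    (v₁ v₂ : Fin n → ℝ) : Matrix (Fin n ⊕ Fin n) (Fin n ⊕ Fin n) ℝ :=
  Matrix.diagonal
      (Sum.elim (fun i => Real.sqrt (v₁ i * uvec S η v₁ i / v₂ i))
        (fun i => Real.sqrt (v₂ i * uvec S η v₁ i / v₁ i))) *
    SoM S *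
    Matrix.diagonal
      (Sum.elim (fun i => Real.sqrt (v₁ i * uvec S η v₁ i / v₂ i))
        (fun i => Real.sqrt (v₂ i * uvec S η v₁ i / v₁ i)))

/-- The ℓ² → ℓ² operator norm of a real matrix. -/
noncomputable def opNorm2 {m : Type*} [Fintype m] [DecidableEq m]
    (A : Matrix m m ℝ) : ℝ :=
  ‖LinearMap.toContinuousLinearMap (Matrix.toEuclideanLin A)‖

/-- The normalized ℓ² norm `‖x‖₂ = ((card m)⁻¹ ∑ᵢ xᵢ²)^{1/2}`. -/
noncomputable def nrm2 {m : Type*} [Fintype m] (x : m → ℝ) : ℝ :=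
  Real.sqrt ((∑ i, (x i) ^ 2) / (Fintype.card m))

/-- The normalized average `⟨w⟩ = (card m)⁻¹ ∑ᵢ wᵢ`. -/
noncomputable def avg2 {m : Type*} [Fintype m] (w : m → ℝ) : ℝ :=
  (∑ i, w i) / (Fintype.card m)

/-- The sign vector `e₋ = (1, …, 1, −1, …, −1)`. -/
def eMinus {n : ℕ} : Fin n ⊕ Fin n → ℝ :=
  Sum.elim (fun _ => (1:ℝ)) (fun _ => (-1:ℝ))

/-!
`F = D S_o D` with a positive diagonal `D`, so `F` is symmetric, nonnegative and bipartite, and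
`F + F²` is entrywise positive because `S` is. A maximiser of the quadratic form of `F` on the
unit sphere may be replaced by its absolute value, which gives a nonnegative eigenvector; positivity
of `F + F²` makes it strictly positive and the eigenspace one-dimensional (subtract the largest
multiple of the positive eigenvector that keeps the difference nonnegative). The Schur test with
this positive eigenvector identifies its eigenvalue with `‖F‖₂`.

The Dyson equation gives `v₁ (η + S v₂) = v₂ (η + Sᵗ v₁)`, hence `D = diag √(v / (η + S_o v))`
and `F √(v (η + S_o v)) = √(v (η + S_o v)) - η √(v / (η + S_o v))`; pairing this with `f₊` by
symmetry of `F` gives the norm formula. Conjugation by `e₋` changes the sign of a bipartite matrix.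
-/

theorem nrm2_smul {m : Type*} [Fintype m] (c : ℝ) (f : m → ℝ) : nrm2 (c • f) = |c| * nrm2 f := by
  simp only [nrm2, Pi.smul_apply, smul_eq_mul, mul_pow, ← Finset.mul_sum, mul_div_assoc]
  rw [Real.sqrt_mul (sq_nonneg c), Real.sqrt_sq_eq_abs]

theorem nrm2_pos {m : Type*} [Fintype m] [Nonempty m] {f : m → ℝ} (hf : ∀ k, 0 < f k) :
    0 < nrm2 f :=
  Real.sqrt_pos.mpr (div_pos (Finset.sum_pos (fun k _ => pow_pos (hf k) 2) Finset.univ_nonempty)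
    (Nat.cast_pos.mpr Fintype.card_pos))

theorem mul_eq_mul_of_one_div_eq_add_div {v₁ v₂ a b τ : ℝ} (hv₁ : v₁ ≠ 0) (hv₂ : v₂ ≠ 0)
    (ha : a ≠ 0) (hb : b ≠ 0) (h₁ : 1 / v₁ = a + τ / b) (h₂ : 1 / v₂ = b + τ / a) :
    v₁ * a = v₂ * b := by
  field_simp at h₁ h₂
  linear_combination v₁ * h₂ - v₂ * h₁

namespace Matrix

variable {m : Type*} [Fintype m]

theorem dotProduct_mulVec_le_abs {M : Matrix m m ℝ} (hM : ∀ k l, 0 ≤ M k l) (x : m → ℝ) :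
    x ⬝ᵥ M *ᵥ x ≤ |x| ⬝ᵥ M *ᵥ |x| := by
  simp only [dotProduct, mulVec, Finset.mul_sum]
  refine Finset.sum_le_sum fun k _ => Finset.sum_le_sum fun l _ => ?_
  calc x k * (M k l * x l) ≤ |x k * (M k l * x l)| := le_abs_self _
    _ = |x| k * (M k l * |x| l) := by simp [abs_mul, abs_of_nonneg (hM k l)]

theorem exists_nonneg_eigenvector_of_isSymm [DecidableEq m] [Nonempty m] {M : Matrix m m ℝ}
    (hM : M.IsSymm) (hnn : ∀ k l, 0 ≤ M k l) :
    ∃ (μ : ℝ) (f : m → ℝ), (∀ k, 0 ≤ f k) ∧ f ≠ 0 ∧ M *ᵥ f = μ • f := by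
  set T := toEuclideanCLM (𝕜 := ℝ) M
  have hT : IsSelfAdjoint T := (isHermitian_iff_isSymm.mpr hM).isSelfAdjoint.map _
  have hQ : ∀ x, T.reApplyInnerSelf x = x.ofLp ⬝ᵥ M *ᵥ x.ofLp := fun x => by
    simp [T, ContinuousLinearMap.reApplyInnerSelf_apply, EuclideanSpace.inner_eq_star_dotProduct]
  obtain ⟨g, hg, hmax⟩ := (isCompact_sphere (0 : EuclideanSpace ℝ m) 1).exists_isMaxOn
    (NormedSpace.sphere_nonempty.mpr zero_le_one) T.reApplyInnerSelf_continuous.continuousOn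
  set g' : EuclideanSpace ℝ m := WithLp.toLp 2 |g.ofLp|
  have hnorm : ‖g'‖ = 1 := by
    rw [← mem_sphere_zero_iff_norm.mp hg, EuclideanSpace.norm_eq, EuclideanSpace.norm_eq]
    simp [g']
  have hmax' : IsMaxOn T.reApplyInnerSelf (Metric.sphere 0 ‖g'‖) g' := fun y hy =>
    calc T.reApplyInnerSelf y ≤ T.reApplyInnerSelf g := hmax (hnorm ▸ hy)
      _ = g.ofLp ⬝ᵥ M *ᵥ g.ofLp := hQ g
      _ ≤ |g.ofLp| ⬝ᵥ M *ᵥ |g.ofLp| := dotProduct_mulVec_le_abs hnn _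
      _ = T.reApplyInnerSelf g' := (hQ g').symm
  have hg'0 : g' ≠ 0 := norm_ne_zero_iff.mp (by rw [hnorm]; exact one_ne_zero)
  have heig := Module.End.mem_eigenspace_iff.mp (hT.hasEigenvector_of_isMaxOn hg'0 hmax').1
  exact ⟨_, |g.ofLp|, fun k => abs_nonneg _, fun h => hg'0 (by simp [g', h]),
    congrArg WithLp.ofLp heig⟩

theorem add_mul_self_mulVec_eq_smul {M : Matrix m m ℝ} {μ : ℝ} {f : m → ℝ}
    (he : M *ᵥ f = μ • f) : (M + M * M) *ᵥ f = (μ + μ ^ 2) • f := by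
  rw [add_mulVec, ← mulVec_mulVec, he, mulVec_smul, he, smul_smul, add_smul, sq]

theorem eq_zero_of_nonneg_of_mulVec_eq_smul {M : Matrix m m ℝ}
    (hM : ∀ k l, 0 < (M + M * M) k l) {μ : ℝ} {h : m → ℝ} (hh : ∀ k, 0 ≤ h k)
    (he : M *ᵥ h = μ • h) {k : m} (hk : h k = 0) : h = 0 := by
  have hsum : ∑ l, (M + M * M) k l * h l = 0 := by
    simpa [hk, mulVec, dotProduct] using congrFun (add_mul_self_mulVec_eq_smul he) k
  funext l
  have := (Finset.sum_eq_zero_iff_of_nonneg fun l _ => mul_nonneg (hM k l).le (hh l)).mp hsum l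
    (Finset.mem_univ l)
  exact (mul_eq_zero.mp this).resolve_left (hM k l).ne'

theorem pos_of_nonneg_of_mulVec_eq_smul {M : Matrix m m ℝ}
    (hM : ∀ k l, 0 < (M + M * M) k l) {μ : ℝ} {f : m → ℝ} (hf : ∀ k, 0 ≤ f k) (hf0 : f ≠ 0)
    (he : M *ᵥ f = μ • f) (k : m) : 0 < f k :=
  (hf k).lt_of_ne' fun hk => hf0 (eq_zero_of_nonneg_of_mulVec_eq_smul hM hf he hk)

theorem exists_eq_smul_of_mulVec_eq_smul [Nonempty m] {M : Matrix m m ℝ}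
    (hM : ∀ k l, 0 < (M + M * M) k l) {μ : ℝ} {f g : m → ℝ} (hf : ∀ k, 0 < f k)
    (hfe : M *ᵥ f = μ • f) (hge : M *ᵥ g = μ • g) : ∃ c : ℝ, g = c • f := by
  obtain ⟨k₀, hk₀⟩ := Finite.exists_min fun k => g k / f k
  refine ⟨g k₀ / f k₀, sub_eq_zero.mp (eq_zero_of_nonneg_of_mulVec_eq_smul hM (μ := μ) (k := k₀)
    (fun k => ?_) ?_ ?_)⟩
  · simpa [sub_nonneg] using (le_div_iff₀ (hf k)).mp (hk₀ k)
  · rw [mulVec_sub, mulVec_smul, hfe, hge, smul_sub, smul_comm]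
  · simp [div_mul_cancel₀ _ (hf k₀).ne']

-- Schur test: Cauchy–Schwarz in each row, weighted by the positive eigenvector.
theorem mulVec_dotProduct_mulVec_le {M : Matrix m m ℝ} (hM : M.IsSymm)
    (hnn : ∀ k l, 0 ≤ M k l) {μ : ℝ} {f : m → ℝ} (hf : ∀ k, 0 < f k) (hfe : M *ᵥ f = μ • f)
    (x : m → ℝ) : M *ᵥ x ⬝ᵥ M *ᵥ x ≤ μ ^ 2 * (x ⬝ᵥ x) := by
  have hrow : ∀ k, (M *ᵥ x) k ^ 2 ≤ μ * f k * ∑ l, M k l * (x l ^ 2 / f l) := fun k => by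
    have hfk : ∑ l, M k l * f l = μ * f k := congrFun hfe k
    rw [← hfk]
    refine Finset.sum_sq_le_sum_mul_sum_of_sq_le_mul _
      (fun l _ => mul_nonneg (hnn k l) (hf l).le)
      (fun l _ => mul_nonneg (hnn k l) (div_nonneg (sq_nonneg _) (hf l).le)) fun l _ =>
        le_of_eq (by field_simp [(hf l).ne'])
  have hcol : ∀ l, ∑ k, f k * M k l = μ * f l := fun l => by
    rw [← hM.eq, ← vecMul_transpose] at hfe
    exact congrFun hfe l
  calc M *ᵥ x ⬝ᵥ M *ᵥ x = ∑ k, (M *ᵥ x) k ^ 2 := by simp only [dotProduct, sq]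
    _ ≤ ∑ k, μ * f k * ∑ l, M k l * (x l ^ 2 / f l) := Finset.sum_le_sum fun k _ => hrow k
    _ = μ * ∑ l, (∑ k, f k * M k l) * (x l ^ 2 / f l) := by
      simp only [Finset.mul_sum, Finset.sum_mul]
      rw [Finset.sum_comm]
      refine Finset.sum_congr rfl fun l _ => Finset.sum_congr rfl fun k _ => by ring
    _ = μ ^ 2 * (x ⬝ᵥ x) := by
      simp only [hcol, dotProduct, Finset.mul_sum]
      refine Finset.sum_congr rfl fun l _ => ?_
      field_simp [(hf l).ne']

theorem opNorm2_eq_of_mulVec_eq_smul [DecidableEq m] [Nonempty m] {M : Matrix m m ℝ}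
    (hM : M.IsSymm) (hnn : ∀ k l, 0 ≤ M k l) {μ : ℝ} {f : m → ℝ} (hf : ∀ k, 0 < f k)
    (hfe : M *ᵥ f = μ • f) : opNorm2 M = μ := by
  set T := toEuclideanCLM (𝕜 := ℝ) M
  have hnormT : opNorm2 M = ‖T‖ := rfl
  have hμ : 0 ≤ μ := by
    obtain ⟨k⟩ := ‹Nonempty m›
    have : 0 ≤ μ * f k := by
      rw [← smul_eq_mul, ← Pi.smul_apply, ← hfe]
      exact Finset.sum_nonneg fun l _ => mul_nonneg (hnn k l) (hf l).le
    exact nonneg_of_mul_nonneg_left this (hf k)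
  have hsq : ∀ x : EuclideanSpace ℝ m, ‖x‖ ^ 2 = x.ofLp ⬝ᵥ x.ofLp := fun x => by
    rw [EuclideanSpace.real_norm_sq_eq]
    simp only [dotProduct, sq]
  rw [hnormT]
  refine le_antisymm (T.opNorm_le_bound hμ fun x => le_of_pow_le_pow_left₀ two_ne_zero
    (by positivity) ?_) ?_
  · rw [mul_pow, hsq, hsq]
    exact mulVec_dotProduct_mulVec_le hM hnn hf hfe x.ofLp
  · set f' : EuclideanSpace ℝ m := WithLp.toLp 2 f
    have hf' : 0 < ‖f'‖ := by
      obtain ⟨k⟩ := ‹Nonempty m›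
      exact norm_pos_iff.mpr fun h => (hf k).ne' (congrFun (congrArg WithLp.ofLp h) k)
    have hTf : ‖T f'‖ = μ * ‖f'‖ := by
      rw [show T f' = μ • f' from congrArg (WithLp.toLp 2) hfe, norm_smul, Real.norm_of_nonneg hμ]
    exact le_of_mul_le_mul_right (hTf ▸ T.le_opNorm f') hf'

theorem existsUnique_pos_eigenvector_opNorm2 [DecidableEq m] [Nonempty m] {M : Matrix m m ℝ}
    (hM : M.IsSymm) (hnn : ∀ k l, 0 ≤ M k l) (hirr : ∀ k l, 0 < (M + M * M) k l) :
    ∃! f : m → ℝ, (∀ k, 0 < f k) ∧ nrm2 f = 1 ∧ M *ᵥ f = opNorm2 M • f := by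
  obtain ⟨μ, f, hf0, hfne, hfe⟩ := exists_nonneg_eigenvector_of_isSymm hM hnn
  have hf := pos_of_nonneg_of_mulVec_eq_smul hirr hf0 hfne hfe
  have hμ := opNorm2_eq_of_mulVec_eq_smul hM hnn hf hfe
  have hnf := nrm2_pos hf
  set f₁ := (nrm2 f)⁻¹ • f
  have hf₁ : ∀ k, 0 < f₁ k := fun k => mul_pos (inv_pos.mpr hnf) (hf k)
  have hnf₁ : nrm2 f₁ = 1 := by
    rw [nrm2_smul, abs_of_pos (inv_pos.mpr hnf), inv_mul_cancel₀ hnf.ne']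
  have hf₁e : M *ᵥ f₁ = opNorm2 M • f₁ := by rw [mulVec_smul, hfe, hμ, smul_comm]
  refine ⟨f₁, ⟨hf₁, hnf₁, hf₁e⟩, fun g ⟨hg, hng, hge⟩ => ?_⟩
  obtain ⟨c, rfl⟩ := exists_eq_smul_of_mulVec_eq_smul hirr hf₁ hf₁e hge
  obtain ⟨k⟩ := ‹Nonempty m›
  have hc : 0 < c := pos_of_mul_pos_left (hg k) (hf₁ k).le
  rw [nrm2_smul, hnf₁, mul_one, abs_of_pos hc] at hng
  rw [hng, one_smul]

theorem eq_one_sub_of_mulVec_eq_sub_smul {M : Matrix m m ℝ} (hM : M.IsSymm) {μ η : ℝ}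
    {f a b : m → ℝ} (hfe : M *ᵥ f = μ • f) (ha : M *ᵥ a = a - η • b) (hfa : f ⬝ᵥ a ≠ 0) :
    μ = 1 - η * (f ⬝ᵥ b) / (f ⬝ᵥ a) := by
  have h : μ * (f ⬝ᵥ a) = f ⬝ᵥ a - η * (f ⬝ᵥ b) := by
    rw [← smul_eq_mul, ← smul_dotProduct, ← hfe, ← vecMul_transpose, hM.eq, ← dotProduct_mulVec,
      ha, dotProduct_sub, dotProduct_smul, smul_eq_mul]
  field_simp
  linear_combination h

theorem diagonal_sqrt_mul_mul_diagonal_sqrt_mulVec [DecidableEq m] (A : Matrix m m ℝ) {η : ℝ}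
    {v q : m → ℝ} (hv : ∀ k, 0 < v k) (hq : ∀ k, 0 < q k) (hAv : ∀ k, q k = η + (A *ᵥ v) k) :
    (diagonal (fun k => √(v k / q k)) * A * diagonal fun k => √(v k / q k)) *ᵥ
        (fun k => √(v k * q k)) =
      (fun k => √(v k * q k)) - η • fun k => √(v k / q k) := by
  have hvq : (diagonal fun k => √(v k / q k)) *ᵥ (fun k => √(v k * q k)) = v := funext fun k => by
    rw [mulVec_diagonal, ← Real.sqrt_mul (div_nonneg (hv k).le (hq k).le),
      show v k / q k * (v k * q k) = v k ^ 2 by field_simp [(hq k).ne'], Real.sqrt_sq (hv k).le]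
  have hqq : ∀ k, √(v k / q k) * q k = √(v k * q k) := fun k => by
    rw [show v k * q k = v k / q k * q k ^ 2 by field_simp [(hq k).ne'],
      Real.sqrt_mul (div_nonneg (hv k).le (hq k).le), Real.sqrt_sq (hq k).le]
  funext k
  rw [← mulVec_mulVec, ← mulVec_mulVec, hvq, mulVec_diagonal, Pi.sub_apply, Pi.smul_apply,
    smul_eq_mul, ← hqq, hAv]
  ring

theorem add_mulVec_apply_pos {η : ℝ} (hη : 0 < η) {A : Matrix m m ℝ}
    (hA : ∀ i j, 0 ≤ A i j) {x : m → ℝ} (hx : ∀ j, 0 ≤ x j) (i : m) : 0 < η + (A *ᵥ x) i :=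
  add_pos_of_pos_of_nonneg hη (Finset.sum_nonneg fun j _ => mul_nonneg (hA i j) (hx j))

variable {p q : Type*}

theorem isSymm_fromBlocks_zero {α : Type*} [Zero α] (B : Matrix p q α) :
    (fromBlocks 0 B Bᵀ 0).IsSymm :=
  .fromBlocks isSymm_zero rfl isSymm_zero

theorem fromBlocks_zero_nonneg {B : Matrix p q ℝ} (hB : ∀ i j, 0 ≤ B i j) :
    ∀ k l, 0 ≤ fromBlocks 0 B Bᵀ 0 k l := by
  rintro (i | i) (j | j) <;> simp [hB]

theorem fromBlocks_zero_add_mul_self_pos [Fintype p] [Fintype q] [Nonempty p] [Nonempty q]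
    {B : Matrix p q ℝ} (hB : ∀ i j, 0 < B i j) :
    ∀ k l, 0 < (fromBlocks 0 B Bᵀ 0 + fromBlocks 0 B Bᵀ 0 * fromBlocks 0 B Bᵀ 0) k l := by
  rw [fromBlocks_multiply, fromBlocks_add]
  rintro (i | i) (j | j) <;> simp [hB, mul_apply, Finset.sum_pos]

theorem fromBlocks_zero_mulVec_sign_mul [Fintype p] [Fintype q] (B : Matrix p q ℝ)
    (C : Matrix q p ℝ) (f : p ⊕ q → ℝ) :
    fromBlocks 0 B C 0 *ᵥ (fun k => (Sum.elim 1 (-1) : p ⊕ q → ℝ) k * f k) =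
      -fun k => (Sum.elim 1 (-1) : p ⊕ q → ℝ) k * (fromBlocks 0 B C 0 *ᵥ f) k := by
  have hsign : (fun k => (Sum.elim 1 (-1) : p ⊕ q → ℝ) k * f k) =
      Sum.elim (f ∘ Sum.inl) (-(f ∘ Sum.inr)) := by
    ext (i | i) <;> simp
  conv_rhs => rw [← Sum.elim_comp_inl_inr f]
  rw [hsign, fromBlocks_mulVec, fromBlocks_mulVec]
  ext (i | i) <;> simp [mulVec_neg]

theorem diagonal_mul_fromBlocks_zero_mul_diagonal [Fintype p] [Fintype q] [DecidableEq p]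
    [DecidableEq q] (w₁ : p → ℝ) (w₂ : q → ℝ) (B : Matrix p q ℝ) :
    diagonal (Sum.elim w₁ w₂) * fromBlocks 0 B Bᵀ 0 * diagonal (Sum.elim w₁ w₂) =
      fromBlocks 0 (diagonal w₁ * B * diagonal w₂) (diagonal w₁ * B * diagonal w₂)ᵀ 0 := by
  rw [← fromBlocks_diagonal, fromBlocks_multiply, fromBlocks_multiply]
  simp [transpose_mul, Matrix.mul_assoc]

end Matrix

section DysonSolution

variable {n : ℕ} {S : Matrix (Fin n) (Fin n) ℝ} {τ η : ℝ} {v₁ v₂ : Fin n → ℝ}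

theorem SoM_mulVec_sumElim (S : Matrix (Fin n) (Fin n) ℝ) (x y : Fin n → ℝ) :
    SoM S *ᵥ Sum.elim x y = Sum.elim (S *ᵥ y) (Sᵀ *ᵥ x) := by
  simp [SoM, fromBlocks_mulVec]

theorem IsDysonSolution.sumElim_pos (hv : IsDysonSolution S τ η v₁ v₂) :
    ∀ k, 0 < Sum.elim v₁ v₂ k
  | .inl i => hv.1 i
  | .inr i => hv.2.1 i

theorem IsDysonSolution.add_SoM_mulVec_pos (hv : IsDysonSolution S τ η v₁ v₂)
    (hS : ∀ i j, 0 ≤ S i j) (hη : 0 < η) : ∀ k, 0 < η + (SoM S *ᵥ Sum.elim v₁ v₂) k :=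
  add_mulVec_apply_pos hη (fromBlocks_zero_nonneg hS) fun k => (hv.sumElim_pos k).le

theorem exists_pos_FM_eq_fromBlocks (hS : ∀ i j, 0 < S i j) (hη : 0 < η)
    (hv₁ : ∀ i, 0 < v₁ i) (hv₂ : ∀ i, 0 < v₂ i) :
    ∃ B : Matrix (Fin n) (Fin n) ℝ, (∀ i j, 0 < B i j) ∧ FM S η v₁ v₂ = fromBlocks 0 B Bᵀ 0 := by
  have hu : ∀ i, 0 < uvec S η v₁ i := fun i =>
    div_pos (hv₁ i) (add_mulVec_apply_pos hη (A := Sᵀ) (fun i j => (hS j i).le)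
      (fun j => (hv₁ j).le) i)
  refine ⟨_, fun i j => ?_, diagonal_mul_fromBlocks_zero_mul_diagonal _ _ S⟩
  rw [mul_diagonal, diagonal_mul]
  exact mul_pos (mul_pos (Real.sqrt_pos.mpr (div_pos (mul_pos (hv₁ i) (hu i)) (hv₂ i))) (hS i j))
    (Real.sqrt_pos.mpr (div_pos (mul_pos (hv₂ j) (hu j)) (hv₁ j)))

theorem FM_eq_diagonal_sqrt_mul_SoM_mul (hS : ∀ i j, 0 ≤ S i j) (hη : 0 < η)
    (hv : IsDysonSolution S τ η v₁ v₂) :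
    FM S η v₁ v₂ =
      diagonal (fun k => √(Sum.elim v₁ v₂ k / (η + (SoM S *ᵥ Sum.elim v₁ v₂) k))) * SoM S *
        diagonal (fun k => √(Sum.elim v₁ v₂ k / (η + (SoM S *ᵥ Sum.elim v₁ v₂) k))) := by
  obtain ⟨hv₁, hv₂, h₁, h₂⟩ := hv
  have ha := add_mulVec_apply_pos hη hS (fun j => (hv₂ j).le)
  have hb := add_mulVec_apply_pos hη (A := Sᵀ) (fun i j => hS j i) (fun j => (hv₁ j).le)
  have hw : Sum.elim (fun i => √(v₁ i * uvec S η v₁ i / v₂ i))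
      (fun i => √(v₂ i * uvec S η v₁ i / v₁ i)) =
      fun k => √(Sum.elim v₁ v₂ k / (η + (SoM S *ᵥ Sum.elim v₁ v₂) k)) := by
    ext (i | i) <;> simp only [SoM_mulVec_sumElim, Sum.elim_inl, Sum.elim_inr, uvec] <;> congr 1
    · have := mul_eq_mul_of_one_div_eq_add_div (hv₁ i).ne' (hv₂ i).ne' (ha i).ne' (hb i).ne'
        (h₁ i) (h₂ i)
      field_simp [(hv₂ i).ne', (ha i).ne', (hb i).ne']
      linear_combination v₁ i * this
    · field_simp [(hv₁ i).ne', (hb i).ne']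
  rw [FM, hw]

theorem FM_mulVec_sqrt (hS : ∀ i j, 0 ≤ S i j) (hη : 0 < η) (hv : IsDysonSolution S τ η v₁ v₂) :
    FM S η v₁ v₂ *ᵥ (fun k => √(Sum.elim v₁ v₂ k * (η + (SoM S *ᵥ Sum.elim v₁ v₂) k))) =
      (fun k => √(Sum.elim v₁ v₂ k * (η + (SoM S *ᵥ Sum.elim v₁ v₂) k))) -
        η • fun k => √(Sum.elim v₁ v₂ k / (η + (SoM S *ᵥ Sum.elim v₁ v₂) k)) := by
  rw [FM_eq_diagonal_sqrt_mul_SoM_mul hS hη hv]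
  exact diagonal_sqrt_mul_mul_diagonal_sqrt_mulVec _ hv.sumElim_pos (hv.add_SoM_mulVec_pos hS hη)
    fun _ => rfl

end DysonSolution

theorem spectral_structure_of_F_general
    (n : ℕ) (hn : 1 ≤ n) (sl su : ℝ) (hsl : 0 < sl)
    (S : Matrix (Fin n) (Fin n) ℝ)
    (hS : ∀ i j, sl / n ≤ S i j ∧ S i j ≤ su / n)
    (τ η : ℝ) (hη : 0 < η)
    (v₁ v₂ : Fin n → ℝ) (hv : IsDysonSolution S τ η v₁ v₂) :
    -- existence and uniqueness of the positive normalized Perron eigenvector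
    (∃! fp : Fin n ⊕ Fin n → ℝ,
      (∀ k, 0 < fp k) ∧ nrm2 fp = 1 ∧
        (FM S η v₁ v₂).mulVec fp = opNorm2 (FM S η v₁ v₂) • fp) ∧
    -- the top eigenspace is one-dimensional
    (∀ fp : Fin n ⊕ Fin n → ℝ,
      ((∀ k, 0 < fp k) ∧ nrm2 fp = 1 ∧
        (FM S η v₁ v₂).mulVec fp = opNorm2 (FM S η v₁ v₂) • fp) →
      ∀ g : Fin n ⊕ Fin n → ℝ,
        (FM S η v₁ v₂).mulVec g = opNorm2 (FM S η v₁ v₂) • g →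
        ∃ c : ℝ, g = c • fp) ∧
    -- the formula for the norm of `F`
    (∀ fp : Fin n ⊕ Fin n → ℝ,
      ((∀ k, 0 < fp k) ∧ nrm2 fp = 1 ∧
        (FM S η v₁ v₂).mulVec fp = opNorm2 (FM S η v₁ v₂) • fp) →
      opNorm2 (FM S η v₁ v₂) =
        1 - η * avg2 (fun k => fp k *
            Real.sqrt (Sum.elim v₁ v₂ k /
              (η + (SoM S).mulVec (Sum.elim v₁ v₂) k))) /
          avg2 (fun k => fp k *
            Real.sqrt (Sum.elim v₁ v₂ k *
              (η + (SoM S).mulVec (Sum.elim v₁ v₂) k)))) ∧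
    -- `f₋ = e₋ f₊` is an eigenvector with eigenvalue `−‖F‖₂`
    (∀ fp : Fin n ⊕ Fin n → ℝ,
      ((∀ k, 0 < fp k) ∧ nrm2 fp = 1 ∧
        (FM S η v₁ v₂).mulVec fp = opNorm2 (FM S η v₁ v₂) • fp) →
      (FM S η v₁ v₂).mulVec (fun k => eMinus k * fp k) =
        (-opNorm2 (FM S η v₁ v₂)) • (fun k => eMinus k * fp k)) := by
  have : Nonempty (Fin n) := ⟨⟨0, hn⟩⟩
  have hSpos : ∀ i j, 0 < S i j := fun i j => (div_pos hsl (by positivity)).trans_le (hS i j).1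
  have hS₀ : ∀ i j, 0 ≤ S i j := fun i j => (hSpos i j).le
  obtain ⟨B, hB, hFB⟩ := exists_pos_FM_eq_fromBlocks hSpos hη hv.1 hv.2.1
  have hsymm : (FM S η v₁ v₂).IsSymm := hFB ▸ isSymm_fromBlocks_zero B
  have hirr := hFB ▸ fromBlocks_zero_add_mul_self_pos hB
  refine ⟨existsUnique_pos_eigenvector_opNorm2 hsymm
      (hFB ▸ fromBlocks_zero_nonneg fun i j => (hB i j).le) hirr,
    fun fp hfp g hg => exists_eq_smul_of_mulVec_eq_smul hirr hfp.1 hfp.2.2 hg,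
    fun fp hfp => ?_, fun fp hfp => ?_⟩
  · have hpos : 0 < fp ⬝ᵥ fun k => √(Sum.elim v₁ v₂ k * (η + (SoM S *ᵥ Sum.elim v₁ v₂) k)) :=
      Finset.sum_pos (fun k _ => mul_pos (hfp.1 k) (Real.sqrt_pos.mpr
        (mul_pos (hv.sumElim_pos k) (hv.add_SoM_mulVec_pos hS₀ hη k)))) Finset.univ_nonempty
    rw [eq_one_sub_of_mulVec_eq_sub_smul hsymm hfp.2.2 (FM_mulVec_sqrt hS₀ hη hv) hpos.ne']
    simp only [avg2]
    rw [mul_div_assoc, mul_div_assoc, div_div_div_cancel_right₀ (by positivity)]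
    rfl
  · rw [hFB] at hfp ⊢
    rw [show eMinus = (Sum.elim 1 (-1) : Fin n ⊕ Fin n → ℝ) from rfl,
      fromBlocks_zero_mulVec_sign_mul, hfp.2.2]
    ext k
    simp only [Pi.neg_apply, Pi.smul_apply, smul_eq_mul]
    ring

/-- **Spectral structure of `F`:** the eigenspace of `F` for its largest
eigenvalue `‖F‖₂` is one-dimensional, spanned by a unique positive normalized
eigenvector `f₊`; the norm formula
`‖F‖₂ = 1 − η⟨f₊√(v/(η+S_o v))⟩/⟨f₊√(v(η+S_o v))⟩` holds; and
`F f₋ = −‖F‖₂ f₋` for `f₋ = e₋ f₊`. -/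
theorem spectral_structure_of_F
    (n : ℕ) (hn : 1 ≤ n) (sl su : ℝ) (hsl : 0 < sl) (hslsu : sl ≤ su)
    (S : Matrix (Fin n) (Fin n) ℝ)
    (hS : ∀ i j, sl / n ≤ S i j ∧ S i j ≤ su / n) (hρ : specRad S = 1)
    (τ η : ℝ) (hτ : 0 ≤ τ) (hη : 0 < η)
    (v₁ v₂ : Fin n → ℝ) (hv : IsDysonSolution S τ η v₁ v₂) :
    -- existence and uniqueness of the positive normalized Perron eigenvector
    (∃! fp : Fin n ⊕ Fin n → ℝ,
      (∀ k, 0 < fp k) ∧ nrm2 fp = 1 ∧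
        (FM S η v₁ v₂).mulVec fp = opNorm2 (FM S η v₁ v₂) • fp) ∧
    -- the top eigenspace is one-dimensional
    (∀ fp : Fin n ⊕ Fin n → ℝ,
      ((∀ k, 0 < fp k) ∧ nrm2 fp = 1 ∧
        (FM S η v₁ v₂).mulVec fp = opNorm2 (FM S η v₁ v₂) • fp) →
      ∀ g : Fin n ⊕ Fin n → ℝ,
        (FM S η v₁ v₂).mulVec g = opNorm2 (FM S η v₁ v₂) • g →
        ∃ c : ℝ, g = c • fp) ∧
    -- the formula for the norm of `F`
    (∀ fp : Fin n ⊕ Fin n → ℝ,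
      ((∀ k, 0 < fp k) ∧ nrm2 fp = 1 ∧
        (FM S η v₁ v₂).mulVec fp = opNorm2 (FM S η v₁ v₂) • fp) →
      opNorm2 (FM S η v₁ v₂) =
        1 - η * avg2 (fun k => fp k *
            Real.sqrt (Sum.elim v₁ v₂ k /
              (η + (SoM S).mulVec (Sum.elim v₁ v₂) k))) /
          avg2 (fun k => fp k *
            Real.sqrt (Sum.elim v₁ v₂ k *
              (η + (SoM S).mulVec (Sum.elim v₁ v₂) k)))) ∧
    -- `f₋ = e₋ f₊` is an eigenvector with eigenvalue `−‖F‖₂`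
    (∀ fp : Fin n ⊕ Fin n → ℝ,
      ((∀ k, 0 < fp k) ∧ nrm2 fp = 1 ∧
        (FM S η v₁ v₂).mulVec fp = opNorm2 (FM S η v₁ v₂) • fp) →
      (FM S η v₁ v₂).mulVec (fun k => eMinus k * fp k) =
        (-opNorm2 (FM S η v₁ v₂)) • (fun k => eMinus k * fp k)) :=
  spectral_structure_of_F_general n hn sl su hsl S hS τ η hη v₁ v₂ hv
end

section
/- Contraction-Inversion Lemma: let n ≥ 1 and ε, η, c₁, c₂, c₃ > 0 with η ≤ εc₁/(2c₂²). Let A, B be Hermitian 2n×2n complex matrices with operator norms ‖A‖ ≤ 1 and ‖B‖ ≤ 1 − c₁η. Suppose there are unit vectors b₊, b₋ ∈ ℂ^{2n} with B b₊ = ‖B‖ b₊, B b₋ = −‖B‖ b₋, and ‖B x‖ ≤ (1−ε)‖x‖ for every x orthogonal to span{b₊, b₋}. Assume further ⟨b₊, A b₊⟩ ≤ 1 − ε and ‖(Id + A) b₋‖ ≤ c₂η. Then Id − AB is invertible and there is a constant C > 0, depending only on c₁, c₂, c₃ and ε, such that every p ∈ ℂ^{2n} with |⟨b₋, p⟩|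 ≤ c₃η‖p‖ satisfies ‖(Id − AB)^{-1} p‖ ≤ C‖p‖. -/
/-!
Write `x = α b₊ + β b₋ + y` with `y ⊥ b₊, b₋`, and let `p = x - ABx`, `X = ‖x‖`, `θ = ‖p‖`.
As `A` is a contraction, `X - ‖Bx‖ ≤ θ`, so the spectral gap on `y` gives `ε‖y‖² ≤ 2Xθ`, and
`‖B‖ ≤ 1 - c₁η` gives `c₁ηX ≤ θ`. Pairing `x = ABx + p` with `b₊` and with `b₋` expresses
`(1 - ‖B‖⟪Ab₊, b₊⟫) α` and `(1 + ‖B‖⟪Ab₋, b₋⟫) β` through `⟪(1 + A) b₋, ·⟫`, `By` and `p`.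
The coefficients have real part at least `ε` and `1 - ‖B‖ ≥ c₁η`, and `‖(1 + A) b₋‖ ≤ c₂η`,
so `|α|` and `|β|` are bounded linearly by `θ` and `‖y‖ = O(√(Xθ))`. Hence
`X ≤ |α| + |β| + ‖y‖ = O(θ + √(Xθ))`, i.e. `X = O(θ)`.
-/

open scoped ComplexInnerProductSpace

variable {E : Type*} [NormedAddCommGroup E] [InnerProductSpace ℂ E]

lemma ContinuousLinearMap.norm_apply_le_of_norm_le_one {T : E →L[ℂ] E} (hT : ‖T‖ ≤ 1) (x : E) :
    ‖T x‖ ≤ ‖x‖ :=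
  (T.le_of_opNorm_le hT x).trans_eq (one_mul _)

lemma inner_apply_eq_zero_of_apply_eq_smul {B : E →L[ℂ] E} (hB : (B : E →ₗ[ℂ] E).IsSymmetric)
    {u y : E} {μ : ℂ} (hu : B u = μ • u) (hy : ⟪u, y⟫ = 0) : ⟪u, B y⟫ = 0 := by
  rw [show ⟪u, B y⟫ = ⟪B u, y⟫ from (hB u y).symm, hu, inner_smul_left, hy, mul_zero]

lemma inner_eq_zero_of_apply_eq_smul_neg {B : E →L[ℂ] E} (hB : (B : E →ₗ[ℂ] E).IsSymmetric)
    {u v : E} {s : ℝ} (hs : s ≠ 0) (hu : B u = (s : ℂ) • u) (hv : B v = (-s : ℂ) • v) :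
    ⟪u, v⟫ = 0 := by
  have h : ⟪B u, v⟫ = ⟪u, B v⟫ := hB u v
  rw [hu, hv, inner_smul_left, inner_smul_right, Complex.conj_ofReal] at h
  have : (2 * s : ℂ) * ⟪u, v⟫ = 0 := by linear_combination h
  simpa [hs] using this

noncomputable def perpPart (u v x : E) : E := x - ⟪u, x⟫ • u - ⟪v, x⟫ • v

lemma eq_add_perpPart (u v x : E) : x = ⟪u, x⟫ • u + ⟪v, x⟫ • v + perpPart u v x := by
  rw [perpPart]; abel

lemma perpPart_comm (u v x : E) : perpPart u v x = perpPart v u x := by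
  simp only [perpPart]; abel

lemma inner_perpPart_left {u v : E} (hu : ‖u‖ = 1) (huv : ⟪u, v⟫ = 0) (x : E) :
    ⟪u, perpPart u v x⟫ = 0 := by
  simp [perpPart, huv, inner_self_eq_norm_sq_to_K, hu]

lemma inner_perpPart_right {u v : E} (hv : ‖v‖ = 1) (huv : ⟪u, v⟫ = 0) (x : E) :
    ⟪v, perpPart u v x⟫ = 0 := by
  rw [perpPart_comm]
  exact inner_perpPart_left hv (by rw [← inner_conj_symm, huv, map_zero]) x

lemma inner_smul_add_smul_eq_zero {u v z : E} (hu : ⟪u, z⟫ = 0) (hv : ⟪v, z⟫ = 0) (a b : ℂ) :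
    ⟪a • u + b • v, z⟫ = 0 := by
  simp [hu, hv]

lemma norm_le_add_perpPart {u v : E} (hu : ‖u‖ = 1) (hv : ‖v‖ = 1) (x : E) :
    ‖x‖ ≤ ‖⟪u, x⟫‖ + ‖⟪v, x⟫‖ + ‖perpPart u v x‖ := by
  conv_lhs => rw [eq_add_perpPart u v x]
  refine (norm_add₃_le ..).trans_eq ?_
  rw [norm_smul, norm_smul, hu, hv, mul_one, mul_one]

lemma apply_smul_add_smul {B : E →L[ℂ] E} {u v : E} {s : ℝ}
    (hu : B u = (s : ℂ) • u) (hv : B v = (-s : ℂ) • v) (a b : ℂ) :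
    B (a • u + b • v) = (s * a) • u + (-s * b) • v := by
  rw [map_add, map_smul, map_smul, hu, hv, smul_smul, smul_smul, mul_comm a, mul_comm b]

lemma apply_eq_add_apply_perpPart {B : E →L[ℂ] E} {u v : E} {s : ℝ}
    (hu : B u = (s : ℂ) • u) (hv : B v = (-s : ℂ) • v) (x : E) :
    B x = (s * ⟪u, x⟫) • u + (-s * ⟪v, x⟫) • v + B (perpPart u v x) := by
  conv_lhs => rw [eq_add_perpPart u v x]
  rw [map_add, apply_smul_add_smul hu hv]

lemma one_sub_norm_mul_norm_le_norm_sub {A : E →L[ℂ] E} (hA : ‖A‖ ≤ 1) (B : E →L[ℂ] E) (x : E) :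
    (1 - ‖B‖) * ‖x‖ ≤ ‖x - A (B x)‖ := calc
  (1 - ‖B‖) * ‖x‖ ≤ ‖x‖ - ‖A (B x)‖ := by
    have := (A.norm_apply_le_of_norm_le_one hA (B x)).trans (B.le_opNorm x)
    linarith
  _ ≤ ‖x - A (B x)‖ := norm_sub_norm_le _ _

lemma sq_norm_sub_sq_norm_apply_le {A B : E →L[ℂ] E} (hA : ‖A‖ ≤ 1) (hB : ‖B‖ ≤ 1) (x : E) :
    ‖x‖ ^ 2 - ‖B x‖ ^ 2 ≤ 2 * ‖x‖ * ‖x - A (B x)‖ := by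
  have hBx : ‖B x‖ ≤ ‖x‖ := B.norm_apply_le_of_norm_le_one hB x
  have hp : ‖x‖ - ‖B x‖ ≤ ‖x - A (B x)‖ := calc
    ‖x‖ - ‖B x‖ ≤ ‖x‖ - ‖A (B x)‖ := by gcongr; exact A.norm_apply_le_of_norm_le_one hA _
    _ ≤ ‖x - A (B x)‖ := norm_sub_norm_le _ _
  nlinarith [norm_nonneg (B x), norm_nonneg (x - A (B x))]

lemma sq_norm_apply_le_of_spectral_gap {B : E →L[ℂ] E} (hB : (B : E →ₗ[ℂ] E).IsSymmetric)
    (hBn : ‖B‖ ≤ 1) {u v : E} {s ε : ℝ} (hu : ‖u‖ = 1) (hv : ‖v‖ = 1)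
    (huv : ⟪u, v⟫ = 0) (hBu : B u = (s : ℂ) • u) (hBv : B v = (-s : ℂ) • v)
    (hgap : ∀ z : E, ⟪u, z⟫ = 0 → ⟪v, z⟫ = 0 → ‖B z‖ ≤ (1 - ε) * ‖z‖) (x : E) :
    ‖B x‖ ^ 2 ≤ ‖x‖ ^ 2 - ε * ‖perpPart u v x‖ ^ 2 := by
  set y := perpPart u v x
  set w := ⟪u, x⟫ • u + ⟪v, x⟫ • v
  have hyu : ⟪u, y⟫ = 0 := inner_perpPart_left hu huv x
  have hyv : ⟪v, y⟫ = 0 := inner_perpPart_right hv huv x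
  have hByu : ⟪u, B y⟫ = 0 := inner_apply_eq_zero_of_apply_eq_smul hB hBu hyu
  have hByv : ⟪v, B y⟫ = 0 := inner_apply_eq_zero_of_apply_eq_smul hB hBv hyv
  have hx : ‖x‖ * ‖x‖ = ‖w‖ * ‖w‖ + ‖y‖ * ‖y‖ := by
    rw [← norm_add_sq_eq_norm_sq_add_norm_sq_of_inner_eq_zero w y
      (inner_smul_add_smul_eq_zero hyu hyv _ _), ← eq_add_perpPart]
  have hBwy : ⟪B w, B y⟫ = 0 := by
    rw [apply_smul_add_smul hBu hBv]; exact inner_smul_add_smul_eq_zero hByu hByv _ _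
  have hBx : ‖B x‖ * ‖B x‖ = ‖B w‖ * ‖B w‖ + ‖B y‖ * ‖B y‖ := by
    rw [← norm_add_sq_eq_norm_sq_add_norm_sq_of_inner_eq_zero _ _ hBwy, ← map_add,
      ← eq_add_perpPart]
  have hBw : ‖B w‖ ≤ ‖w‖ := B.norm_apply_le_of_norm_le_one hBn w
  have hBy : ‖B y‖ ≤ (1 - ε) * ‖y‖ := hgap y hyu hyv
  have hBy' : ‖B y‖ ≤ ‖y‖ := B.norm_apply_le_of_norm_le_one hBn y
  nlinarith [norm_nonneg (B w), norm_nonneg (B y)]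

lemma inner_apply_apply_eq {A B : E →L[ℂ] E} (hA : (A : E →ₗ[ℂ] E).IsSymmetric) {u v : E}
    {s : ℝ} (hBu : B u = (s : ℂ) • u) (hBv : B v = (-s : ℂ) • v) (z x : E) :
    ⟪z, A (B x)⟫ = s * ⟪u, x⟫ * ⟪A z, u⟫ - s * ⟪v, x⟫ * ⟪A z, v⟫ + ⟪A z, B (perpPart u v x)⟫ := by
  rw [show ⟪z, A (B x)⟫ = ⟪A z, B x⟫ from (hA z (B x)).symm, apply_eq_add_apply_perpPart hBu hBv,
    inner_add_right, inner_add_right, inner_smul_right, inner_smul_right]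
  ring

lemma inner_apply_eq_inner_one_add_apply {A : E →L[ℂ] E} {v w : E} (hvw : ⟪v, w⟫ = 0) :
    ⟪A v, w⟫ = ⟪(1 + A) v, w⟫ := by
  simp [hvw]

lemma mul_norm_inner_le_of_re_inner_apply_le {A B : E →L[ℂ] E}
    (hA : (A : E →ₗ[ℂ] E).IsSymmetric) (hAn : ‖A‖ ≤ 1) (hBn : ‖B‖ ≤ 1) {u v : E} {s ε c : ℝ}
    (hs₀ : 0 ≤ s) (hs₁ : s ≤ 1) (hε : ε ≤ 1) (hu : ‖u‖ = 1) (huv : ⟪u, v⟫ = 0)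
    (hBu : B u = (s : ℂ) • u) (hBv : B v = (-s : ℂ) • v) (hAu : ⟪u, A u⟫.re ≤ 1 - ε)
    (hAv : ‖(1 + A) v‖ ≤ c) (x : E) :
    ε * ‖⟪u, x⟫‖ ≤ c * ‖⟪v, x⟫‖ + ‖perpPart u v x‖ + ‖⟪u, x - A (B x)⟫‖ := by
  set y := perpPart u v x
  have hid : (1 - s * ⟪A u, u⟫) * ⟪u, x⟫
      = -(s * ⟪v, x⟫ * ⟪A u, v⟫) + ⟪A u, B y⟫ + ⟪u, x - A (B x)⟫ := by
    rw [inner_sub_right, inner_apply_apply_eq hA hBu hBv]; ring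
  have hcoef : ε ≤ ‖1 - s * ⟪A u, u⟫‖ := by
    have hre : (1 - s * ⟪A u, u⟫).re = 1 - s * ⟪u, A u⟫.re := by
      rw [show ⟪A u, u⟫ = ⟪u, A u⟫ from hA u u, Complex.sub_re, Complex.one_re,
        Complex.re_ofReal_mul]
    refine le_trans ?_ (hre ▸ Complex.re_le_norm _)
    nlinarith
  have hAuv : ‖⟪A u, v⟫‖ ≤ c := calc
    ‖⟪A u, v⟫‖ = ‖⟪(1 + A) v, u⟫‖ := by
      rw [show ⟪A u, v⟫ = ⟪u, A v⟫ from hA u v, norm_inner_symm,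
        inner_apply_eq_inner_one_add_apply (by rw [inner_eq_zero_symm]; exact huv)]
    _ ≤ c := (norm_inner_le_norm _ _).trans (by rw [hu, mul_one]; exact hAv)
  have hAuBy : ‖⟪A u, B y⟫‖ ≤ ‖y‖ := calc
    ‖⟪A u, B y⟫‖ ≤ ‖A u‖ * ‖B y‖ := norm_inner_le_norm _ _
    _ ≤ 1 * ‖y‖ := by
      gcongr
      · exact (A.norm_apply_le_of_norm_le_one hAn u).trans hu.le
      · exact B.norm_apply_le_of_norm_le_one hBn y
    _ = ‖y‖ := one_mul _
  calc ε * ‖⟪u, x⟫‖ ≤ ‖(1 - s * ⟪A u, u⟫) * ⟪u, x⟫‖ := by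
        rw [norm_mul]; gcongr
    _ ≤ s * ‖⟪v, x⟫‖ * ‖⟪A u, v⟫‖ + ‖⟪A u, B y⟫‖ + ‖⟪u, x - A (B x)⟫‖ := by
        rw [hid]
        refine (norm_add₃_le ..).trans_eq ?_
        rw [norm_neg, norm_mul, norm_mul, Complex.norm_real, Real.norm_of_nonneg hs₀]
    _ ≤ c * ‖⟪v, x⟫‖ + ‖y‖ + ‖⟪u, x - A (B x)⟫‖ := by
        have : s * ‖⟪v, x⟫‖ * ‖⟪A u, v⟫‖ ≤ c * ‖⟪v, x⟫‖ := calc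
          s * ‖⟪v, x⟫‖ * ‖⟪A u, v⟫‖ ≤ 1 * ‖⟪v, x⟫‖ * c := by gcongr
          _ = c * ‖⟪v, x⟫‖ := by ring
        linarith

lemma one_sub_mul_norm_inner_le {A B : E →L[ℂ] E} (hA : (A : E →ₗ[ℂ] E).IsSymmetric)
    (hAn : ‖A‖ ≤ 1) (hB : (B : E →ₗ[ℂ] E).IsSymmetric) (hBn : ‖B‖ ≤ 1) {u v : E} {s c : ℝ}
    (hs₀ : 0 ≤ s) (hs₁ : s ≤ 1) (hu : ‖u‖ = 1) (hv : ‖v‖ = 1) (huv : ⟪u, v⟫ = 0)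
    (hBu : B u = (s : ℂ) • u) (hBv : B v = (-s : ℂ) • v) (hAv : ‖(1 + A) v‖ ≤ c)
    (x : E) :
    (1 - s) * ‖⟪v, x⟫‖ ≤ c * ‖⟪u, x⟫‖ + c * ‖perpPart u v x‖ + ‖⟪v, x - A (B x)⟫‖ := by
  set y := perpPart u v x
  have hc : 0 ≤ c := (norm_nonneg _).trans hAv
  have hid : (1 + s * ⟪A v, v⟫) * ⟪v, x⟫
      = s * ⟪u, x⟫ * ⟪A v, u⟫ + ⟪A v, B y⟫ + ⟪v, x - A (B x)⟫ := by
    rw [inner_sub_right, inner_apply_apply_eq hA hBu hBv]; ring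
  have hcoef : 1 - s ≤ ‖1 + s * ⟪A v, v⟫‖ := by
    have hre : (1 + s * ⟪A v, v⟫).re = 1 + s * ⟪A v, v⟫.re := by
      rw [Complex.add_re, Complex.one_re, Complex.re_ofReal_mul]
    have hAvv : -1 ≤ ⟪A v, v⟫.re := by
      have := (Complex.abs_re_le_norm _).trans <| (norm_inner_le_norm (A v) v).trans <|
        mul_le_one₀ ((A.norm_apply_le_of_norm_le_one hAn v).trans hv.le) (norm_nonneg v) hv.le
      exact (abs_le.mp this).1
    refine le_trans ?_ (hre ▸ Complex.re_le_norm _)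
    nlinarith
  have hAvu : ‖⟪A v, u⟫‖ ≤ c := by
    rw [inner_apply_eq_inner_one_add_apply (by rw [inner_eq_zero_symm]; exact huv)]
    exact (norm_inner_le_norm _ _).trans (by rw [hu, mul_one]; exact hAv)
  have hAvBy : ‖⟪A v, B y⟫‖ ≤ c * ‖y‖ := by
    have hvBy : ⟪v, B y⟫ = 0 :=
      inner_apply_eq_zero_of_apply_eq_smul hB hBv (inner_perpPart_right hv huv x)
    rw [inner_apply_eq_inner_one_add_apply hvBy]
    exact (norm_inner_le_norm _ _).trans
      (mul_le_mul hAv (B.norm_apply_le_of_norm_le_one hBn y) (norm_nonneg _) hc)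
  calc (1 - s) * ‖⟪v, x⟫‖ ≤ ‖(1 + s * ⟪A v, v⟫) * ⟪v, x⟫‖ := by
        rw [norm_mul]; gcongr
    _ ≤ s * ‖⟪u, x⟫‖ * ‖⟪A v, u⟫‖ + ‖⟪A v, B y⟫‖ + ‖⟪v, x - A (B x)⟫‖ := by
        rw [hid]
        refine (norm_add₃_le ..).trans_eq ?_
        rw [norm_mul, norm_mul, Complex.norm_real, Real.norm_of_nonneg hs₀]
    _ ≤ c * ‖⟪u, x⟫‖ + c * ‖y‖ + ‖⟪v, x - A (B x)⟫‖ := by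
        have : s * ‖⟪u, x⟫‖ * ‖⟪A v, u⟫‖ ≤ c * ‖⟪u, x⟫‖ := calc
          s * ‖⟪u, x⟫‖ * ‖⟪A v, u⟫‖ ≤ 1 * ‖⟪u, x⟫‖ * c := by gcongr
          _ = c * ‖⟪u, x⟫‖ := by ring
        linarith

noncomputable def inversionBound (ε c₁ c₂ c₃ : ℝ) : ℝ :=
  12 * (c₁ + c₂ + c₃) ^ 2 / (c₁ ^ 2 * ε ^ 3)

lemma one_le_inversionBound {ε c₁ c₂ c₃ : ℝ} (hε : 0 < ε) (hε₁ : ε ≤ 1) (hc₁ : 0 < c₁)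
    (hc₂ : 0 ≤ c₂) (hc₃ : 0 ≤ c₃) : 1 ≤ inversionBound ε c₁ c₂ c₃ := by
  rw [inversionBound, one_le_div (by positivity)]
  have hc : c₁ ^ 2 ≤ (c₁ + c₂ + c₃) ^ 2 := by gcongr; linarith
  have hε3 : ε ^ 3 ≤ 1 := pow_le_one₀ hε.le hε₁
  nlinarith [sq_nonneg c₁, pow_pos hε 3]

lemma le_inversionBound_mul {ε c₁ c₂ c₃ η X a b y θ : ℝ} (hε : 0 < ε) (hε₁ : ε ≤ 1)
    (hc₁ : 0 < c₁) (hc₂ : 0 ≤ c₂) (hc₃ : 0 ≤ c₃) (hη : 0 < η) (ha₀ : 0 ≤ a) (hb₀ : 0 ≤ b)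
    (hy₀ : 0 ≤ y) (hθ₀ : 0 ≤ θ) (hX : X ≤ a + b + y) (hbX : b ≤ X) (hθ : c₁ * η * X ≤ θ)
    (hy : ε * y ^ 2 ≤ 2 * X * θ) (ha : ε * a ≤ c₂ * η * b + y + θ)
    (hb : c₁ * η * b ≤ c₂ * η * a + c₂ * η * y + c₃ * η * θ) :
    X ≤ inversionBound ε c₁ c₂ c₃ * θ := by
  set K := c₁ + c₂ + c₃
  have hb₁ : c₁ * b ≤ c₂ * (a + y) + c₃ * θ := by
    refine le_of_mul_le_mul_left ?_ hη
    linarith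
  have ha₁ : c₁ * ε * a ≤ K * θ + c₁ * y := by
    have : c₂ * (c₁ * η * b) ≤ c₂ * θ := by
      gcongr; exact (mul_le_mul_of_nonneg_left hbX (by positivity)).trans hθ
    nlinarith
  have hX₁ : c₁ ^ 2 * ε * X ≤ 2 * K ^ 2 * θ + 2 * K * c₁ * y := by
    have h₁ : c₁ * X ≤ (c₁ + c₂) * (a + y) + c₃ * θ := by
      nlinarith [mul_le_mul_of_nonneg_left hX hc₁.le]
    have h₂ : c₁ * ε * (a + y) ≤ K * θ + 2 * c₁ * y := by
      nlinarith [mul_le_mul_of_nonneg_left hε₁ (mul_nonneg hc₁.le hy₀)]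
    calc c₁ ^ 2 * ε * X = c₁ * ε * (c₁ * X) := by ring
      _ ≤ c₁ * ε * ((c₁ + c₂) * (a + y) + c₃ * θ) := by gcongr
      _ = (c₁ + c₂) * (c₁ * ε * (a + y)) + (c₁ * ε) * (c₃ * θ) := by ring
      _ ≤ K * (K * θ + 2 * c₁ * y) + K * (K * θ) := by
        gcongr
        · linarith
        · nlinarith [mul_le_mul_of_nonneg_left hε₁ hc₁.le]
        · linarith
      _ = 2 * K ^ 2 * θ + 2 * K * c₁ * y := by ring
  -- AM-GM, with `ε y² ≤ 2 X θ`
  have hy₁ : 2 * K * c₁ * y * ε ^ 2 ≤ c₁ ^ 2 * ε ^ 3 * X / 2 + 4 * K ^ 2 * θ := by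
    have hX₀ : 0 ≤ X := hb₀.trans hbX
    refine (pow_le_pow_iff_left₀ (by positivity) (by positivity) two_ne_zero).mp ?_
    have := mul_le_mul_of_nonneg_left hy (by positivity : 0 ≤ 4 * K ^ 2 * c₁ ^ 2 * ε ^ 3)
    nlinarith [sq_nonneg (c₁ ^ 2 * ε ^ 3 * X / 2 - 4 * K ^ 2 * θ)]
  rw [inversionBound, div_mul_eq_mul_div, le_div_iff₀ (by positivity)]
  have hε₂ : ε ^ 2 ≤ 1 := pow_le_one₀ hε.le hε₁
  nlinarith [mul_le_mul_of_nonneg_left hX₁ (sq_nonneg ε),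
    mul_le_mul_of_nonneg_right hε₂ (by positivity : 0 ≤ 2 * K ^ 2 * θ)]

theorem norm_le_inversionBound_mul_norm_sub {A B : E →L[ℂ] E}
    (hA : (A : E →ₗ[ℂ] E).IsSymmetric) (hB : (B : E →ₗ[ℂ] E).IsSymmetric) (hAn : ‖A‖ ≤ 1)
    {ε c₁ c₂ c₃ η : ℝ} (hε : 0 < ε) (hε₁ : ε ≤ 1) (hc₁ : 0 < c₁) (hc₂ : 0 ≤ c₂) (hc₃ : 0 ≤ c₃)
    (hη : 0 < η) (hBn : ‖B‖ ≤ 1 - c₁ * η) {bp bm : E} (hbp : ‖bp‖ = 1) (hbm : ‖bm‖ = 1)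
    (hBp : B bp = (‖B‖ : ℂ) • bp) (hBm : B bm = (-‖B‖ : ℂ) • bm)
    (hgap : ∀ z : E, ⟪bp, z⟫ = 0 → ⟪bm, z⟫ = 0 → ‖B z‖ ≤ (1 - ε) * ‖z‖)
    (hApp : ⟪bp, A bp⟫.re ≤ 1 - ε) (hAmm : ‖(1 + A) bm‖ ≤ c₂ * η) (x : E)
    (hx : ‖⟪bm, x - A (B x)⟫‖ ≤ c₃ * η * ‖x - A (B x)‖) :
    ‖x‖ ≤ inversionBound ε c₁ c₂ c₃ * ‖x - A (B x)‖ := by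
  rcases (norm_nonneg B).eq_or_lt with hB₀ | hB₀
  · rw [norm_eq_zero.mp hB₀.symm, zero_apply, map_zero, sub_zero]
    exact le_mul_of_one_le_left (norm_nonneg x) (one_le_inversionBound hε hε₁ hc₁ hc₂ hc₃)
  have horth : ⟪bp, bm⟫ = 0 := inner_eq_zero_of_apply_eq_smul_neg hB hB₀.ne' hBp hBm
  have hBn₁ : ‖B‖ ≤ 1 := by nlinarith
  have hBx := sq_norm_apply_le_of_spectral_gap hB hBn₁ hbp hbm horth hBp hBm hgap x
  have hxBx := sq_norm_sub_sq_norm_apply_le hAn hBn₁ x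
  have hα := mul_norm_inner_le_of_re_inner_apply_le hA hAn hBn₁ hB₀.le hBn₁ hε₁ hbp horth
    hBp hBm hApp hAmm x
  have hβ := one_sub_mul_norm_inner_le hA hAn hB hBn₁ hB₀.le hBn₁ hbp hbm horth hBp hBm hAmm x
  have hbpp : ‖⟪bp, x - A (B x)⟫‖ ≤ ‖x - A (B x)‖ :=
    (norm_inner_le_norm _ _).trans_eq (by rw [hbp, one_mul])
  refine le_inversionBound_mul hε hε₁ hc₁ hc₂ hc₃ hη (norm_nonneg _) (norm_nonneg _)
    (norm_nonneg _) (norm_nonneg _) (norm_le_add_perpPart hbp hbm x)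
    ((norm_inner_le_norm _ _).trans_eq (by rw [hbm, one_mul])) ?_ (by linarith) (by linarith) ?_
  · calc c₁ * η * ‖x‖ ≤ (1 - ‖B‖) * ‖x‖ := by gcongr; linarith
      _ ≤ ‖x - A (B x)‖ := one_sub_norm_mul_norm_le_norm_sub hAn B x
  · have : c₁ * η * ‖⟪bm, x⟫‖ ≤ (1 - ‖B‖) * ‖⟪bm, x⟫‖ := by gcongr; linarith
    linarith

/-- **Contraction-Inversion Lemma:** let `A`, `B` be Hermitian operators on
`ℂ^{2n}` with `‖A‖ ≤ 1` and `‖B‖ ≤ 1 − c₁η`, with normalized extremal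
eigenvectors `b₊`, `b₋` of `B` and a spectral gap `ε` on their orthogonal
complement; if `⟨b₊, A b₊⟩ ≤ 1 − ε` and `‖(Id + A) b₋‖ ≤ c₂η`, then `Id − AB`
is invertible and `‖(Id − AB)⁻¹ p‖ ≤ C‖p‖` for every `p` with
`|⟨b₋, p⟩| ≤ c₃η‖p‖`, where `C` depends only on `c₁, c₂, c₃, ε`. -/
theorem contraction_inversion_lemma
    (ε c₁ c₂ c₃ : ℝ) (hε : 0 < ε) (hc₁ : 0 < c₁) (hc₂ : 0 < c₂) (hc₃ : 0 < c₃) :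
    ∃ C > (0:ℝ),
      ∀ (n : ℕ), 1 ≤ n →
      ∀ (η : ℝ), 0 < η → η ≤ ε * c₁ / (2 * c₂ ^ 2) →
      ∀ (A B : EuclideanSpace ℂ (Fin (2 * n)) →L[ℂ] EuclideanSpace ℂ (Fin (2 * n))),
        IsSelfAdjoint A → IsSelfAdjoint B →
        ‖A‖ ≤ 1 → ‖B‖ ≤ 1 - c₁ * η →
      ∀ (bp bm : EuclideanSpace ℂ (Fin (2 * n))),
        ‖bp‖ = 1 → ‖bm‖ = 1 →
        B bp = (‖B‖ : ℂ) • bp →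
        B bm = (-(‖B‖ : ℝ) : ℂ) • bm →
        (∀ x : EuclideanSpace ℂ (Fin (2 * n)),
          ⟪bp, x⟫ = 0 → ⟪bm, x⟫ = 0 → ‖B x‖ ≤ (1 - ε) * ‖x‖) →
        (⟪bp, A bp⟫.re ≤ 1 - ε) →
        ‖(1 + A) bm‖ ≤ c₂ * η →
        IsUnit (1 - A * B) ∧
          ∀ p : EuclideanSpace ℂ (Fin (2 * n)),
            ‖⟪bm, p⟫‖ ≤ c₃ * η * ‖p‖ →
            ‖Ring.inverse (1 - A * B) p‖ ≤ C * ‖p‖ := by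
  have hε' : 0 < min ε 1 := lt_min hε one_pos
  refine ⟨inversionBound (min ε 1) c₁ c₂ c₃, one_pos.trans_le <|
    one_le_inversionBound hε' (min_le_right _ _) hc₁ hc₂.le hc₃.le, ?_⟩
  intro n _ η hη _ A B hA hB hAn hBn bp bm hbp hbm hBp hBm hgap hApp hAmm
  have hAB : ‖A * B‖ < 1 := calc
    ‖A * B‖ ≤ ‖A‖ * ‖B‖ := norm_mul_le _ _
    _ ≤ 1 * (1 - c₁ * η) := by gcongr
    _ < 1 := by nlinarith
  have hunit : IsUnit (1 - A * B) := (Units.oneSub (A * B) hAB).isUnit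
  refine ⟨hunit, fun p hp => ?_⟩
  set q := Ring.inverse (1 - A * B) p
  have hq : q - A (B q) = p := by
    change ((1 - A * B) * Ring.inverse (1 - A * B)) p = p
    rw [Ring.mul_inverse_cancel _ hunit]
    rfl
  rw [← hq] at hp ⊢
  have hgap' : ∀ z, ⟪bp, z⟫ = 0 → ⟪bm, z⟫ = 0 → ‖B z‖ ≤ (1 - min ε 1) * ‖z‖ :=
    fun z hz₁ hz₂ => (hgap z hz₁ hz₂).trans (by gcongr; exact min_le_left _ _)
  exact norm_le_inversionBound_mul_norm_sub hA.isSymmetric hB.isSymmetric hAn hε'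
    (min_le_right _ _) hc₁ hc₂.le hc₃.le hη hBn hbp hbm hBp hBm hgap'
    (hApp.trans (by linarith [min_le_left ε 1])) hAmm q hp
end
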